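/- arXiv:0806.3483 — 10 statements merged into one kernel-verified Lean document; each statement's English description precedes it below -/
import Mathlib

section
/- For real numbers p_1,...,p_n with 1/2 ≤ p_i ≤ 1 and ∏ p_i ≤ p^n, one has (1/2^n) ∏_{i=1}^n (1+p_i) ≤ p^{log₂(4/3)·n}. -/
open Real Finset

lemma aux_key (x : ℝ) (hx1 : 1/2 ≤ x) (hx2 : x ≤ 1) :
    (1 + x) / 2 ≤ x ^ (Real.logb 2 (4/3)) := by
  set c := Real.logb 2 (4/3) with hc
  have hc0 : 0 ≤ c := Real.logb_nonneg one_lt_two (by norm_num)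
  have hc1 : c ≤ 1 := by
    have h1 : Real.logb 2 (4/3) ≤ Real.logb 2 2 :=
      Real.logb_le_logb_of_le (b := 2) one_lt_two (by norm_num) (by norm_num)
    rw [hc]
    simpa using h1
  have h2c : (2:ℝ) ^ c = 4/3 := Real.rpow_logb (by norm_num) (by norm_num) (by norm_num)
  have hhalf : ((1:ℝ)/2) ^ c = 3/4 := by
    rw [show ((1:ℝ)/2) = 2⁻¹ by norm_num, Real.inv_rpow (by norm_num), h2c]
    norm_num
  have hconc := Real.concaveOn_rpow hc0 hc1
  have h := hconc.2 (Set.mem_Ici.2 (by norm_num : (0:ℝ) ≤ 1/2))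
    (Set.mem_Ici.2 (by norm_num : (0:ℝ) ≤ 1))
    (show (0:ℝ) ≤ 2*(1-x) by linarith) (show (0:ℝ) ≤ 2*x-1 by linarith)
    (show 2*(1-x) + (2*x-1) = 1 by ring)
  simp only [smul_eq_mul] at h
  rw [hhalf, Real.one_rpow] at h
  have hx : 2*(1-x) * (1/2) + (2*x-1) * 1 = x := by ring
  rw [hx] at h
  linarith

/-- For reals `1/2 ≤ p i ≤ 1` with `∏ p i ≤ q ^ n`, one has
`(1/2^n) * ∏ (1 + p i) ≤ q ^ (log₂(4/3) * n)`. -/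
theorem stmt_1 (n : ℕ) (p : Fin n → ℝ) (q : ℝ)
    (hp : ∀ i, 1 / 2 ≤ p i ∧ p i ≤ 1) (hq : 1 / 2 ≤ q) (hq1 : q ≤ 1)
    (hprod : ∏ i, p i ≤ q ^ n) :
    (1 / 2 ^ n) * ∏ i, (1 + p i) ≤ q ^ (Real.logb 2 (4 / 3) * n) := by
  set c := Real.logb 2 (4/3) with hc
  have hc0 : 0 ≤ c := Real.logb_nonneg one_lt_two (by norm_num)
  have hpos : ∀ i, 0 ≤ p i := fun i => le_trans (by norm_num) (hp i).1
  have step1 : (1 / 2 ^ n) * ∏ i, (1 + p i) = ∏ i, ((1 + p i) / 2) := by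
    rw [Finset.prod_div_distrib, Finset.prod_const]
    simp [div_eq_mul_inv, mul_comm]
  have step2 : ∏ i, ((1 + p i) / 2) ≤ ∏ i, (p i) ^ c := by
    apply Finset.prod_le_prod
    · intro i _; have := (hp i).1; positivity
    · intro i _; exact aux_key (p i) (hp i).1 (hp i).2
  have step3 : ∏ i, (p i) ^ c = (∏ i, p i) ^ c := by
    rw [← Real.finset_prod_rpow _ _ (fun i _ => hpos i)]
  have step4 : (∏ i, p i) ^ c ≤ (q ^ n) ^ c :=
    Real.rpow_le_rpow (Finset.prod_nonneg fun i _ => hpos i) hprod hc0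
  have step5 : ((q:ℝ) ^ n) ^ c = q ^ (c * n) := by
    rw [← Real.rpow_natCast q n, ← Real.rpow_mul (by linarith), mul_comm]
  calc (1 / 2 ^ n) * ∏ i, (1 + p i) = ∏ i, ((1 + p i) / 2) := step1
    _ ≤ ∏ i, (p i) ^ c := step2
    _ = (∏ i, p i) ^ c := step3
    _ ≤ (q ^ n) ^ c := step4
    _ = q ^ (c * n) := step5
end

section
/- The function f(t) = H((1+√t)/2), where H is the binary entropy, is concave on the interval [0,1]. -/
/-- Binary entropy with base-2 logarithm, `H(q) = -q log₂ q - (1-q) log₂ (1-q)`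
(with the convention `log₂ 0 = 0`, so `H 0 = H 1 = 0`). -/
noncomputable def binEntropy2 (q : ℝ) : ℝ :=
  -q * Real.logb 2 q - (1 - q) * Real.logb 2 (1 - q)

/-!
Write `s = √t`. Away from the endpoints, `f(t) = H((1 + s)/2)` has derivative
`(log (1 - s) - log (1 + s)) / (4 s)` and second derivative
`(log (1 + s) - log (1 - s) - 2 s / (1 - s²)) / (8 s³)`. Its sign is that of the elementary
inequality `log ((1 + s)/(1 - s)) ≤ 2 s / (1 - s²)`, which is `log x ≤ sinh (log x)` at
`x = (1 + s)/(1 - s) ≥ 1`. Continuity at the endpoints gives concavity on all of `[0, 1]`.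
-/

open Real Set

lemma Real.log_le_half_sub_inv {x : ℝ} (hx : 1 ≤ x) : log x ≤ (x - x⁻¹) / 2 := by
  rw [← sinh_log (by linarith)]
  exact self_le_sinh_iff.mpr (log_nonneg hx)

lemma Real.log_one_add_sub_log_one_sub_le {s : ℝ} (hs₀ : 0 ≤ s) (hs₁ : s < 1) :
    log (1 + s) - log (1 - s) ≤ 2 * s / (1 - s ^ 2) := by
  have h₁ : 0 < 1 - s := by linarith
  have h₂ : 0 < 1 + s := by linarith
  calc log (1 + s) - log (1 - s) = log ((1 + s) / (1 - s)) := (log_div h₂.ne' h₁.ne').symm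
    _ ≤ ((1 + s) / (1 - s) - ((1 + s) / (1 - s))⁻¹) / 2 :=
        log_le_half_sub_inv ((le_div_iff₀ h₁).mpr (by linarith))
    _ = 2 * s / (1 - s ^ 2) := by
        have : 1 - s ^ 2 ≠ 0 := by nlinarith
        field_simp
        ring

lemma hasDerivAt_binEntropy_half_one_add_sqrt {t : ℝ} (ht₀ : 0 < t) (ht₁ : t ≠ 1) :
    HasDerivAt (fun t => binEntropy ((1 + √t) / 2))
      ((log (1 - √t) - log (1 + √t)) / (4 * √t)) t := by
  have hs₀ : 0 < √t := sqrt_pos.mpr ht₀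
  have hs₁ : √t ≠ 1 := sqrt_eq_one.not.mpr ht₁
  have h := (hasDerivAt_binEntropy (p := (1 + √t) / 2) (by positivity)
    (fun h => hs₁ (by linarith))).comp t (((hasDerivAt_sqrt ht₀.ne').const_add 1).div_const 2)
  refine h.congr_deriv ?_
  rw [show 1 - (1 + √t) / 2 = (1 - √t) / 2 by ring, log_div (sub_ne_zero.mpr hs₁.symm) two_ne_zero,
    log_div (by positivity) two_ne_zero]
  field_simp
  ring

lemma hasDerivAt_log_one_sub_sqrt_sub_log_one_add_sqrt_div {t : ℝ} (ht₀ : 0 < t) (ht₁ : t ≠ 1) :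
    HasDerivAt (fun t => (log (1 - √t) - log (1 + √t)) / (4 * √t))
      ((log (1 + √t) - log (1 - √t) - 2 * √t / (1 - t)) / (8 * √t ^ 3)) t := by
  have hs₀ : 0 < √t := sqrt_pos.mpr ht₀
  have h₁ : 1 - √t ≠ 0 := sub_ne_zero.mpr (Ne.symm (sqrt_eq_one.not.mpr ht₁))
  have h₂ : 1 + √t ≠ 0 := by positivity
  have hsqrt := hasDerivAt_sqrt ht₀.ne'
  have h := (((hasDerivAt_log h₁).comp t (hsqrt.const_sub 1)).sub
    ((hasDerivAt_log h₂).comp t (hsqrt.const_add 1))).div (hsqrt.const_mul 4) (by positivity)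
  refine h.congr_deriv ?_
  rw [show 1 - t = (1 - √t) * (1 + √t) by nlinarith [sq_sqrt ht₀.le]]
  simp only [Function.comp_apply, Pi.sub_apply]
  field_simp
  ring

theorem concaveOn_binEntropy_half_one_add_sqrt :
    ConcaveOn ℝ (Icc 0 1) (fun t => binEntropy ((1 + √t) / 2)) := by
  refine concaveOn_of_hasDerivWithinAt2_nonpos (convex_Icc 0 1) (by fun_prop)
    (f' := fun t => (log (1 - √t) - log (1 + √t)) / (4 * √t))
    (f'' := fun t => (log (1 + √t) - log (1 - √t) - 2 * √t / (1 - t)) / (8 * √t ^ 3)) ?_ ?_ ?_ <;>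
    rw [interior_Icc] <;> rintro t ⟨ht₀, ht₁⟩
  · exact (hasDerivAt_binEntropy_half_one_add_sqrt ht₀ ht₁.ne).hasDerivWithinAt
  · exact (hasDerivAt_log_one_sub_sqrt_sub_log_one_add_sqrt_div ht₀ ht₁.ne).hasDerivWithinAt
  · have hs₁ : √t < 1 := (sqrt_lt' one_pos).mpr (by simpa using ht₁)
    refine div_nonpos_of_nonpos_of_nonneg (sub_nonpos.mpr ?_) (by positivity)
    simpa [sq_sqrt ht₀.le] using log_one_add_sub_log_one_sub_le (sqrt_nonneg t) hs₁

lemma binEntropy2_eq_inv_log_two_smul (q : ℝ) : binEntropy2 q = (log 2)⁻¹ • binEntropy q := by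
  simp only [binEntropy2, binEntropy, logb, log_inv, smul_eq_mul]
  ring

/-- The function `t ↦ H((1 + √t)/2)` is concave on `[0,1]`. -/
theorem stmt_2 :
    ConcaveOn ℝ (Set.Icc (0 : ℝ) 1) (fun t => binEntropy2 ((1 + Real.sqrt t) / 2)) := by
  simp only [binEntropy2_eq_inv_log_two_smul]
  exact concaveOn_binEntropy_half_one_add_sqrt.smul (inv_nonneg.mpr (log_pos one_lt_two).le)
end

section
/- Let Γ_0, Γ_1, ..., Γ_{2n} be pairwise anticommuting Hermitian operators with Γ_j² = I on a Hilbert space, and let t_j ∈ [0,1] with ∑_{j=0}^{2n} t_j ≤ 1. Then the minimum of (1/K)∑_{j=0}^{K-1} H((1+√t_j)/2) subject to ∑ t_j ≤ 1, t_j ≥ 0 equals 1 - 1/K, attained when one t_j equals 1 and the rest are 0. -/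
/-!
Writing `t = x²`, the claim reduces to the pointwise bound `H((1 + x)/2) ≥ 1 - x²` on `[0, 1]`,
with equality at `x = 0` and `x = 1`; summing it over `j` and using `∑ t_j ≤ 1` gives the lower
bound, and a single `t_j = 1` attains it. For the pointwise bound, the difference
`G x = binEntropy ((1 + x)/2) - log 2 * (1 - x²)` vanishes at both endpoints and
`G' = -ψ/2` with `ψ x = log (1 + x) - log (1 - x) - 4 log 2 * x` convex on `[0, 1)` and `ψ 0 = 0`.
So `G'` can only change sign from `+` to `-`, and `G` is at least `min (G 0) (G 1) = 0`.
-/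

open Real Set

lemma binEntropy2_eq_binEntropy_div_log_two (q : ℝ) :
    binEntropy2 q = binEntropy q / log 2 := by
  simp only [binEntropy2, binEntropy, logb, log_inv]
  ring

lemma min_le_of_hasDerivAt_of_neg_imp_nonpos {f f' : ℝ → ℝ} {a b x : ℝ}
    (hf : ContinuousOn f (Icc a b)) (hderiv : ∀ y ∈ Ioo a b, HasDerivAt f (f' y) y)
    (hsign : ∀ y ∈ Ioo a b, ∀ z ∈ Ioo a b, y ≤ z → f' y < 0 → f' z ≤ 0)
    (hx : x ∈ Icc a b) : min (f a) (f b) ≤ f x := by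
  by_cases hneg : ∃ y ∈ Ioo a x, f' y < 0
  · obtain ⟨y, hy, hy_neg⟩ := hneg
    have hyab : y ∈ Ioo a b := ⟨hy.1, hy.2.trans_le hx.2⟩
    have hanti : AntitoneOn f (Icc y b) := by
      refine antitoneOn_of_hasDerivWithinAt_nonpos (f' := f') (convex_Icc y b)
        (hf.mono (Icc_subset_Icc hyab.1.le le_rfl)) (fun z hz => ?_) (fun z hz => ?_)
      all_goals rw [interior_Icc] at hz
      · exact (hderiv z ⟨hyab.1.trans hz.1, hz.2⟩).hasDerivWithinAt
      · exact hsign y hyab z ⟨hyab.1.trans hz.1, hz.2⟩ hz.1.le hy_neg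
    exact (min_le_right _ _).trans
      (hanti ⟨hy.2.le, hx.2⟩ ⟨hyab.2.le, le_rfl⟩ hx.2)
  · push Not at hneg
    have hmono : MonotoneOn f (Icc a x) := by
      refine monotoneOn_of_hasDerivWithinAt_nonneg (f' := f') (convex_Icc a x)
        (hf.mono (Icc_subset_Icc le_rfl hx.2)) (fun z hz => ?_) (fun z hz => ?_)
      all_goals rw [interior_Icc] at hz
      · exact (hderiv z ⟨hz.1, hz.2.trans_le hx.2⟩).hasDerivWithinAt
      · exact hneg z hz
    exact (min_le_left _ _).trans (hmono ⟨le_rfl, hx.1⟩ ⟨hx.1, le_rfl⟩ hx.1)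

noncomputable def entropyGapSlope (x : ℝ) : ℝ :=
  log (1 + x) - log (1 - x) - 4 * log 2 * x

lemma hasDerivAt_entropyGapSlope {x : ℝ} (h1 : -1 < x) (h2 : x < 1) :
    HasDerivAt entropyGapSlope (2 / (1 - x ^ 2) - 4 * log 2) x := by
  have hp : 1 + x ≠ 0 := by linarith
  have hm : 1 - x ≠ 0 := by linarith
  have hlog_add := ((hasDerivAt_id x).const_add 1).log hp
  have hlog_sub := ((hasDerivAt_id x).const_sub 1).log hm
  have hlin := (hasDerivAt_id x).const_mul (4 * log 2)
  refine ((hlog_add.sub hlog_sub).sub hlin).congr_deriv ?_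
  rw [show 1 - x ^ 2 = (1 + x) * (1 - x) by ring]
  simp only [id]
  field_simp
  ring

lemma convexOn_entropyGapSlope : ConvexOn ℝ (Ico 0 1) entropyGapSlope := by
  have hderiv : ∀ x ∈ Ico (0 : ℝ) 1,
      HasDerivAt entropyGapSlope (2 / (1 - x ^ 2) - 4 * log 2) x :=
    fun x hx => hasDerivAt_entropyGapSlope (by linarith [hx.1]) hx.2
  refine MonotoneOn.convexOn_of_deriv (convex_Ico 0 1)
    (fun x hx => (hderiv x hx).continuousAt.continuousWithinAt) ?_ ?_
  all_goals rw [interior_Ico]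
  · exact fun x hx => (hderiv x (Ioo_subset_Ico_self hx)).differentiableAt.differentiableWithinAt
  · intro x hx y hy hxy
    rw [(hderiv x (Ioo_subset_Ico_self hx)).deriv, (hderiv y (Ioo_subset_Ico_self hy)).deriv]
    have hy_sq : y ^ 2 < 1 := by nlinarith [hy.1, hy.2]
    have hsq : x ^ 2 ≤ y ^ 2 := pow_le_pow_left₀ hx.1.le hxy 2
    gcongr 2 / ?_ - _
    linarith

lemma entropyGapSlope_nonneg_of_pos {y z : ℝ} (hy : y ∈ Ioo 0 1) (hz : z ∈ Ioo 0 1) (hyz : y ≤ z)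
    (hpos : 0 < entropyGapSlope y) : 0 ≤ entropyGapSlope z := by
  rcases hyz.eq_or_lt with rfl | hlt
  · exact hpos.le
  have hzero : entropyGapSlope 0 = 0 := by simp [entropyGapSlope]
  have hle := convexOn_entropyGapSlope.le_right_of_left_le (x := 0) (y := z) (z := y)
    ⟨le_rfl, one_pos⟩ (Ioo_subset_Ico_self hz) (by rw [openSegment_eq_Ioo hz.1]; exact ⟨hy.1, hlt⟩)
    (by rw [hzero]; exact hpos.le)
  linarith

lemma log_two_mul_one_sub_sq_le_binEntropy {x : ℝ} (hx : x ∈ Icc (0 : ℝ) 1) :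
    log 2 * (1 - x ^ 2) ≤ binEntropy ((1 + x) / 2) := by
  set G : ℝ → ℝ := fun x => binEntropy ((1 + x) / 2) - log 2 * (1 - x ^ 2)
  have hderiv : ∀ y ∈ Ioo (0 : ℝ) 1, HasDerivAt G (-entropyGapSlope y / 2) y := by
    intro y hy
    have hp : 1 + y ≠ 0 := by linarith [hy.1]
    have hm : 1 - y ≠ 0 := by linarith [hy.2]
    have hH := (hasDerivAt_binEntropy (p := (1 + y) / 2) (by positivity) (by linarith [hy.2])).comp y
      (((hasDerivAt_id y).const_add 1).div_const 2)
    have hquad := ((hasDerivAt_pow 2 y).const_sub 1).const_mul (log 2)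
    refine (hH.sub hquad).congr_deriv ?_
    rw [show 1 - (1 + y) / 2 = (1 - y) / 2 by ring, log_div hm two_ne_zero,
      log_div hp two_ne_zero, entropyGapSlope]
    simp only [Nat.cast_ofNat]
    ring
  have hmin := min_le_of_hasDerivAt_of_neg_imp_nonpos (f := G) (by fun_prop) hderiv
    (fun y hy z hz hyz hneg => by
      have := entropyGapSlope_nonneg_of_pos hy hz hyz (by linarith)
      linarith) hx
  have hG0 : G 0 = 0 := by simp [G]
  have hG1 : G 1 = 0 := by norm_num [G]
  rw [hG0, hG1, min_self] at hmin
  linarith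

lemma one_sub_le_binEntropy2_one_add_sqrt_div_two {t : ℝ} (h0 : 0 ≤ t) (h1 : t ≤ 1) :
    1 - t ≤ binEntropy2 ((1 + √t) / 2) := by
  have hx : √t ∈ Icc (0 : ℝ) 1 := ⟨sqrt_nonneg t, sqrt_le_one.mpr h1⟩
  have hbound := log_two_mul_one_sub_sq_le_binEntropy hx
  rw [sq_sqrt h0] at hbound
  rw [binEntropy2_eq_binEntropy_div_log_two, le_div_iff₀ (log_pos one_lt_two)]
  linarith

lemma binEntropy2_one_add_sqrt_div_two_of_eq_zero_or_one {t : ℝ} (ht : t = 0 ∨ t = 1) :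
    binEntropy2 ((1 + √t) / 2) = 1 - t := by
  rw [binEntropy2_eq_binEntropy_div_log_two]
  rcases ht with rfl | rfl
  · simp [(log_pos one_lt_two).ne']
  · norm_num

theorem stmt_3_general {K : ℕ} (hK : 0 < K) :
    IsLeast {v : ℝ | ∃ t : Fin K → ℝ, (∀ j, 0 ≤ t j) ∧ (∑ j, t j) ≤ 1 ∧
        v = (1 / K) * ∑ j, binEntropy2 ((1 + Real.sqrt (t j)) / 2)}
      (1 - 1 / K) := by
  have hK' : (K : ℝ) ≠ 0 := by positivity
  have hsum_one_sub (t : Fin K → ℝ) : ∑ j, (1 - t j) = K - ∑ j, t j := by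
    simp [Finset.sum_sub_distrib]
  constructor
  · set t : Fin K → ℝ := Pi.single ⟨0, hK⟩ 1
    have ht : ∀ j, t j = 0 ∨ t j = 1 := fun j => by
      by_cases h : j = ⟨0, hK⟩ <;> simp [t, h]
    refine ⟨t, fun j => by rcases ht j with h | h <;> simp [h], by simp [t], ?_⟩
    rw [Finset.sum_congr rfl fun j _ => binEntropy2_one_add_sqrt_div_two_of_eq_zero_or_one (ht j),
      hsum_one_sub]
    field_simp
    simp [t]
  · rintro v ⟨t, ht0, hts, rfl⟩
    have hsum : ∑ j, (1 - t j) ≤ ∑ j, binEntropy2 ((1 + √(t j)) / 2) :=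
      Finset.sum_le_sum fun j _ => one_sub_le_binEntropy2_one_add_sqrt_div_two (ht0 j)
        ((Finset.single_le_sum (fun i _ => ht0 i) (Finset.mem_univ j)).trans hts)
    rw [hsum_one_sub] at hsum
    rw [show (1 : ℝ) - 1 / K = 1 / K * (K - 1) by field_simp]
    gcongr
    linarith

/-- Given `2n+1` pairwise anticommuting Hermitian operators squaring to the identity and
`K ≤ 2n+1`, the minimum of `(1/K) ∑_{j<K} H((1 + √(t j))/2)` over `t j ≥ 0` with
`∑ t j ≤ 1` equals `1 - 1/K`, attained when one `t j` is `1` and the rest are `0`. -/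
theorem stmt_3 {n d K : ℕ} (hK : 0 < K) (hKn : K ≤ 2 * n + 1)
    (Γ : Fin (2 * n + 1) → Matrix (Fin d) (Fin d) ℂ)
    (hherm : ∀ j, (Γ j).IsHermitian)
    (hanti : ∀ i j, i ≠ j → Γ i * Γ j = -(Γ j * Γ i))
    (hsq : ∀ j, Γ j * Γ j = 1) :
    IsLeast {v : ℝ | ∃ t : Fin K → ℝ, (∀ j, 0 ≤ t j) ∧ (∑ j, t j) ≤ 1 ∧
        v = (1 / K) * ∑ j, binEntropy2 ((1 + Real.sqrt (t j)) / 2)}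
      (1 - 1 / K) :=
  stmt_3_general hK
end

section
/- Let Γ_1,...,Γ_K be pairwise anticommuting Hermitian d×d matrices with Γ_j² = I, and let ρ be a density matrix on C^d. Then ∑_{j=1}^K (Tr(ρΓ_j))² ≤ 1. -/
/-!
Put `c j = Re Tr(ρ Γ_j)`, `s = ∑ c_j²` and `G = ∑ c_j Γ_j`. Anticommutation kills the cross terms,
so `G² = s`. Hence `(1 - G)ᴴ(1 - G) = (1 + s) - 2G`, and pairing this positive matrix with `ρ`
gives `0 ≤ (1 + s) - 2 Re Tr(ρG) = 1 - s`.
-/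

open scoped ComplexOrder
open Matrix

theorem Finset.sum_mul_sum_self_of_anticommute {ι A : Type*} [NonUnitalNonAssocSemiring A]
    (s : Finset ι) (x : ι → A) (hx : ∀ i j, i ≠ j → x i * x j + x j * x i = 0) :
    (∑ i ∈ s, x i) * (∑ i ∈ s, x i) = ∑ i ∈ s, x i * x i := by
  classical
  induction s using Finset.induction_on with
  | empty => simp
  | insert a s ha ih =>
    have hcross : (∑ i ∈ s, x i) * x a + x a * ∑ i ∈ s, x i = 0 := by
      rw [Finset.sum_mul, Finset.mul_sum, ← Finset.sum_add_distrib]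
      exact Finset.sum_eq_zero fun i hi => hx i a (ne_of_mem_of_not_mem hi ha)
    rw [Finset.sum_insert ha, Finset.sum_insert ha, ← ih]
    calc (x a + ∑ i ∈ s, x i) * (x a + ∑ i ∈ s, x i)
        = x a * x a + (∑ i ∈ s, x i) * (∑ i ∈ s, x i)
          + ((∑ i ∈ s, x i) * x a + x a * ∑ i ∈ s, x i) := by
          simp only [add_mul, mul_add]; abel
      _ = _ := by rw [hcross, add_zero]

theorem Matrix.PosSemidef.trace_mul_conjTranspose_mul_self_nonneg {n R : Type*} [Fintype n]
    [CommRing R] [PartialOrder R] [StarRing R] [AddLeftMono R]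
    {ρ : Matrix n n R} (hρ : ρ.PosSemidef) (X : Matrix n n R) :
    0 ≤ (ρ * (Xᴴ * X)).trace := by
  rw [← Matrix.mul_assoc, trace_mul_comm, ← Matrix.mul_assoc]
  exact (hρ.mul_mul_conjTranspose_same X).trace_nonneg

theorem Matrix.PosSemidef.two_mul_re_trace_mul_le {n : Type*} [Fintype n] [DecidableEq n]
    {ρ G : Matrix n n ℂ} (hρ : ρ.PosSemidef) (hG : G.IsHermitian) {s : ℝ}
    (hGG : G * G = s • (1 : Matrix n n ℂ)) :
    2 * (ρ * G).trace.re ≤ (1 + s) * ρ.trace.re := by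
  have hsq : (1 - G)ᴴ * (1 - G) = (1 + s) • (1 : Matrix n n ℂ) - (2 : ℝ) • G := by
    simp only [conjTranspose_sub, conjTranspose_one, hG.eq, sub_mul, mul_sub, Matrix.one_mul,
      Matrix.mul_one, hGG]
    module
  have hnonneg := (Complex.le_def.mp (hρ.trace_mul_conjTranspose_mul_self_nonneg (1 - G))).1
  rw [hsq] at hnonneg
  simp only [Matrix.mul_sub, Matrix.mul_smul, Matrix.mul_one, trace_sub, trace_smul,
    Complex.sub_re, Complex.real_smul, Complex.re_ofReal_mul, Complex.zero_re] at hnonneg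
  linarith

/-- Meta-uncertainty relation: for pairwise anticommuting Hermitian matrices `Γ_j` with
`Γ_j² = I` and any density matrix `ρ`, one has `∑_j (Tr(ρ Γ_j))² ≤ 1`. -/
theorem stmt_5 {d K : ℕ}
    (Γ : Fin K → Matrix (Fin d) (Fin d) ℂ)
    (hherm : ∀ j, (Γ j).IsHermitian)
    (hanti : ∀ i j, i ≠ j → Γ i * Γ j + Γ j * Γ i = 0)
    (hsq : ∀ j, Γ j * Γ j = 1)
    (ρ : Matrix (Fin d) (Fin d) ℂ) (hρ : ρ.PosSemidef) (htr : ρ.trace = 1) :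
    ∑ j, ((ρ * Γ j).trace).re ^ 2 ≤ 1 := by
  set c : Fin K → ℝ := fun j => ((ρ * Γ j).trace).re
  set G : Matrix (Fin d) (Fin d) ℂ := ∑ j, c j • Γ j
  have hG : G.IsHermitian := by
    simp [G, IsHermitian, conjTranspose_sum, (hherm _).eq]
  have hGG : G * G = (∑ j, c j ^ 2) • (1 : Matrix (Fin d) (Fin d) ℂ) := by
    rw [Finset.sum_mul_sum_self_of_anticommute, Finset.sum_smul]
    · simp [hsq, sq, smul_smul]
    · intro i j hij
      rw [smul_mul_smul, smul_mul_smul, mul_comm (c j), ← smul_add, hanti i j hij, smul_zero]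
  have hreG : (ρ * G).trace.re = ∑ j, c j ^ 2 := by
    simp [G, Matrix.mul_sum, trace_sum, Complex.re_sum, c, sq]
  have hbound := hρ.two_mul_re_trace_mul_le hG hGG
  rw [hreG, htr, Complex.one_re] at hbound
  linarith
end

section
/- Let A be the n×n matrix with 1's on the diagonal and superdiagonal, -1 in the lower-left corner, and 0's elsewhere. Then the eigenvalues of A are γ_s = 1 + e^{iπ(2s+1)/n} for s = 0,...,n-1, and the largest singular value of A is 2cos(π/(2n)). -/
/-!
`A = 1 + P` where `P` is the negacyclic shift, and for every root `μ` of `z ^ n = -1` the vector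
`u_μ = (μ ^ j)ⱼ` satisfies `P u_μ = μ u_μ` and `Pᵀ u_μ = μ⁻¹ u_μ`. As `|μ| = 1`, `Aᴴ = Aᵀ` acts on
`u_μ` by `1 + conj μ`, so `Aᴴ A u_μ = |1 + μ|² u_μ`. The `n` roots `μ_s = exp (iπ(2s+1)/n)` are
distinct, so the `u_{μ_s}` are the rows of an invertible Vandermonde matrix; hence every eigenvalue
of `Aᴴ A` is one of the `|1 + μ_s|² = 2 + 2 cos (π(2s+1)/n)`, the largest being
`2 + 2 cos (π/n) = (2 cos (π/(2n)))²` at `s = 0`.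
-/
open Matrix Complex ComplexConjugate

namespace Matrix

variable {ι K : Type*} [Fintype ι] [DecidableEq ι] [Field K]

theorem exists_eq_of_isUnit_of_rows_mulVec_eq_smul {B W : Matrix ι ι K} {d : ι → K}
    (hW : IsUnit W) (hBW : ∀ i, B *ᵥ W i = d i • W i) {c : K} {v : ι → K} (hv : v ≠ 0)
    (hBv : B *ᵥ v = c • v) : ∃ i, d i = c := by
  obtain ⟨w, rfl⟩ := vecMul_surjective_iff_isUnit.mpr hW v
  have hdw : (fun i => d i * w i) = c • w := by
    apply vecMul_injective_of_isUnit hW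
    calc (fun i => d i * w i) ᵥ* W = B *ᵥ (w ᵥ* W) := by
          simp only [vecMul_eq_sum, mulVec_sum, mulVec_smul, hBW, smul_smul, mul_comm]
      _ = (c • w) ᵥ* W := by rw [hBv, smul_vecMul]
  obtain ⟨i, hi⟩ : ∃ i, w i ≠ 0 := by
    by_contra! h
    obtain rfl : w = 0 := funext h
    exact hv (zero_vecMul W)
  exact ⟨i, mul_right_cancel₀ hi (congrFun hdw i)⟩

end Matrix

theorem val_finRotate {n : ℕ} (j : Fin n) :
    (finRotate n j : ℕ) = if (j : ℕ) = n - 1 then 0 else (j : ℕ) + 1 := by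
  cases n with
  | zero => exact j.elim0
  | succ n => rw [coe_finRotate]; simp [Fin.ext_iff]

theorem finRotate_ne_self {n : ℕ} (hn : 2 ≤ n) (j : Fin n) : finRotate n j ≠ j := by
  rw [Ne, Fin.ext_iff, val_finRotate]
  split_ifs <;> omega

/-- `1 + P` for the negacyclic shift `(P v) j = v (j + 1)`, `(P v) (n - 1) = -v 0` (if `n ≥ 2`). -/
def negacyclicBidiagonal (R : Type*) [Ring R] (n : ℕ) : Matrix (Fin n) (Fin n) R :=
  of fun j k => if (j : ℕ) = (k : ℕ) then 1 else if (k : ℕ) = (j : ℕ) + 1 then 1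
    else if (j : ℕ) = n - 1 ∧ (k : ℕ) = 0 then -1 else 0

namespace negacyclicBidiagonal

variable {R : Type*} {n : ℕ}

section Ring

variable [Ring R]

theorem apply_self (j : Fin n) : negacyclicBidiagonal R n j j = 1 := by
  simp [negacyclicBidiagonal]

theorem apply_finRotate (hn : 2 ≤ n) (j : Fin n) :
    negacyclicBidiagonal R n j (finRotate n j) = if (j : ℕ) = n - 1 then -1 else 1 := by
  have := j.isLt
  simp only [negacyclicBidiagonal, of_apply, val_finRotate]
  split_ifs <;> first | rfl | (exfalso; omega)

theorem apply_eq_zero {j k : Fin n} (hkj : k ≠ j) (hk : k ≠ finRotate n j) :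
    negacyclicBidiagonal R n j k = 0 := by
  rw [Ne, Fin.ext_iff] at hkj hk
  rw [val_finRotate] at hk
  have := k.isLt
  simp only [negacyclicBidiagonal, of_apply]
  split_ifs at hk ⊢ <;> first | rfl | (exfalso; omega)

theorem conjTranspose_eq_transpose [StarRing R] :
    (negacyclicBidiagonal R n)ᴴ = (negacyclicBidiagonal R n)ᵀ := by
  ext j k
  simp only [conjTranspose_apply, transpose_apply, negacyclicBidiagonal, of_apply]
  split_ifs <;> simp

theorem mulVec_apply (hn : 2 ≤ n) (v : Fin n → R) (j : Fin n) :
    (negacyclicBidiagonal R n *ᵥ v) j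
      = v j + (if (j : ℕ) = n - 1 then -1 else 1) * v (finRotate n j) := by
  rw [mulVec, dotProduct, Fintype.sum_eq_add j (finRotate n j) (finRotate_ne_self hn j).symm
    fun k hk => by rw [apply_eq_zero hk.1 hk.2, zero_mul], apply_self, apply_finRotate hn,
    one_mul]

theorem transpose_mulVec_apply_finRotate (hn : 2 ≤ n) (v : Fin n → R) (j : Fin n) :
    ((negacyclicBidiagonal R n)ᵀ *ᵥ v) (finRotate n j)
      = v (finRotate n j) + (if (j : ℕ) = n - 1 then -1 else 1) * v j := by
  rw [mulVec, dotProduct, Fintype.sum_eq_add (finRotate n j) j (finRotate_ne_self hn j)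
    fun k hk => ?_]
  · simp only [transpose_apply, apply_self, apply_finRotate hn, one_mul]
  · rw [transpose_apply, apply_eq_zero (Ne.symm hk.1) ((finRotate n).injective.ne hk.2).symm,
      zero_mul]

end Ring

section CommRing

variable [CommRing R] {μ : R}

theorem sign_mul_pow_finRotate (hμ : μ ^ n = -1) (j : Fin n) :
    (if (j : ℕ) = n - 1 then -1 else 1) * μ ^ (finRotate n j : ℕ) = μ ^ ((j : ℕ) + 1) := by
  rw [val_finRotate]
  split_ifs with h
  · rw [h, Nat.sub_add_cancel (by have := j.isLt; omega), hμ, pow_zero, mul_one]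
  · rw [one_mul]

theorem mulVec_powers (hn : 2 ≤ n) (hμ : μ ^ n = -1) :
    negacyclicBidiagonal R n *ᵥ (fun j : Fin n => μ ^ (j : ℕ))
      = (1 + μ) • fun j : Fin n => μ ^ (j : ℕ) := by
  funext j
  rw [mulVec_apply hn, sign_mul_pow_finRotate hμ, Pi.smul_apply, smul_eq_mul]
  ring

theorem transpose_mulVec_powers (hn : 2 ≤ n) (hμ : μ ^ n = -1) {ν : R} (hμν : μ * ν = 1) :
    (negacyclicBidiagonal R n)ᵀ *ᵥ (fun j : Fin n => μ ^ (j : ℕ))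
      = (1 + ν) • fun j : Fin n => μ ^ (j : ℕ) := by
  funext j
  obtain ⟨i, rfl⟩ := (finRotate n).surjective j
  rw [transpose_mulVec_apply_finRotate hn, Pi.smul_apply, smul_eq_mul]
  set σ : R := if (i : ℕ) = n - 1 then -1 else 1
  have hσ : σ * σ = 1 := by simp only [σ]; split_ifs <;> simp
  -- `σ μ^(rot i) = μ^(i+1)`, `σ² = 1` and `μ ν = 1` give `σ μ^i = ν μ^(rot i)`.
  linear_combination (-σ * μ ^ (i : ℕ)) * hμν - ν * σ * sign_mul_pow_finRotate hμ i
    + ν * μ ^ (finRotate n i : ℕ) * hσ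

end CommRing

theorem conjTranspose_mul_self_mulVec_powers {n : ℕ} (hn : 2 ≤ n) {μ : ℂ} (hμ : μ ^ n = -1) :
    ((negacyclicBidiagonal ℂ n)ᴴ * negacyclicBidiagonal ℂ n) *ᵥ (fun j : Fin n => μ ^ (j : ℕ))
      = ((‖1 + μ‖ : ℂ) ^ 2) • fun j : Fin n => μ ^ (j : ℕ) := by
  have hμ1 : ‖μ‖ = 1 := (pow_eq_one_iff_of_nonneg (n := n) (norm_nonneg μ) (by omega)).mp
    (by rw [← norm_pow, hμ, norm_neg, norm_one])
  have hμμ : μ * conj μ = 1 := by rw [mul_conj', hμ1]; simp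
  rw [← mulVec_mulVec, mulVec_powers hn hμ, mulVec_smul, conjTranspose_eq_transpose,
    transpose_mulVec_powers hn hμ hμμ, smul_smul, mul_comm, ← conj_mul', map_add, map_one]

end negacyclicBidiagonal

theorem Real.cos_le_cos_of_le_of_le_two_pi_sub {a θ : ℝ} (ha : 0 ≤ a) (haθ : a ≤ θ)
    (hθ : θ ≤ 2 * Real.pi - a) : Real.cos θ ≤ Real.cos a := by
  rcases le_total θ Real.pi with hθπ | hπθ
  · exact Real.cos_le_cos_of_nonneg_of_le_pi ha hθπ haθ
  · rw [← Real.cos_two_pi_sub θ]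
    exact Real.cos_le_cos_of_nonneg_of_le_pi ha (by linarith) (by linarith)

theorem Complex.norm_one_add_exp_ofReal_mul_I_sq (θ : ℝ) :
    ‖1 + exp (θ * I)‖ ^ 2 = 2 + 2 * Real.cos θ := by
  rw [exp_mul_I, Complex.sq_norm, normSq_apply]
  simp [← ofReal_cos, ← ofReal_sin]
  nlinarith [Real.sin_sq_add_cos_sq θ]

noncomputable def negacyclicRoot (n s : ℕ) : ℂ := exp (Real.pi * I * (2 * s + 1) / n)

theorem negacyclicRoot_eq_pow (n s : ℕ) :
    negacyclicRoot n s = exp (Real.pi * I / n) ^ (2 * s + 1) := by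
  rw [negacyclicRoot, ← exp_nat_mul]
  push_cast
  ring_nf

theorem negacyclicRoot_pow_self {n : ℕ} (hn : n ≠ 0) (s : ℕ) : negacyclicRoot n s ^ n = -1 := by
  rw [negacyclicRoot_eq_pow, ← pow_mul, mul_comm (2 * s + 1), pow_mul, ← exp_nat_mul,
    mul_div_cancel₀ _ (Nat.cast_ne_zero.mpr hn), exp_pi_mul_I, Odd.neg_one_pow ⟨s, rfl⟩]

theorem negacyclicRoot_injective {n : ℕ} (hn : n ≠ 0) :
    Function.Injective fun s : Fin n => negacyclicRoot n s := by
  have hζ : IsPrimitiveRoot (exp (Real.pi * I / n)) (2 * n) := by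
    convert isPrimitiveRoot_exp (2 * n) (by omega) using 2
    push_cast
    field_simp
  intro s t hst
  simp only [negacyclicRoot_eq_pow] at hst
  have := hζ.pow_inj (by omega) (by omega) hst
  exact Fin.ext (by omega)

theorem norm_one_add_negacyclicRoot_sq (n s : ℕ) :
    ‖1 + negacyclicRoot n s‖ ^ 2 = 2 + 2 * Real.cos (Real.pi * (2 * s + 1) / n) := by
  rw [← norm_one_add_exp_ofReal_mul_I_sq, negacyclicRoot]
  push_cast
  ring_nf

theorem two_mul_cos_pi_div_two_mul_sq (n : ℕ) :
    (2 * Real.cos (Real.pi / (2 * n))) ^ 2 = 2 + 2 * Real.cos (Real.pi / n) := by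
  rw [mul_pow, Real.cos_sq, show 2 * (Real.pi / (2 * n)) = Real.pi / n by ring]
  ring

theorem norm_one_add_negacyclicRoot_zero_sq (n : ℕ) :
    ‖1 + negacyclicRoot n 0‖ ^ 2 = (2 * Real.cos (Real.pi / (2 * n))) ^ 2 := by
  rw [norm_one_add_negacyclicRoot_sq, two_mul_cos_pi_div_two_mul_sq]
  norm_num

theorem norm_one_add_negacyclicRoot_sq_le {n s : ℕ} (hs : s < n) :
    ‖1 + negacyclicRoot n s‖ ^ 2 ≤ (2 * Real.cos (Real.pi / (2 * n))) ^ 2 := by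
  have hn : (0 : ℝ) < n := by exact_mod_cast (show 0 < n by omega)
  have hsn : (s : ℝ) + 1 ≤ n := by exact_mod_cast hs
  rw [norm_one_add_negacyclicRoot_sq, two_mul_cos_pi_div_two_mul_sq]
  gcongr 2 + 2 * ?_
  apply Real.cos_le_cos_of_le_of_le_two_pi_sub (by positivity)
  · gcongr
    nlinarith [Real.pi_pos, (s.cast_nonneg : (0 : ℝ) ≤ s)]
  · rw [le_sub_iff_add_le, ← add_div, div_le_iff₀ hn]
    nlinarith [Real.pi_pos]

theorem Real.cos_pi_div_two_mul_nonneg (n : ℕ) : 0 ≤ Real.cos (Real.pi / (2 * n)) := by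
  have h0 : 0 ≤ Real.pi / (2 * n) := by positivity
  rcases n.eq_zero_or_pos with rfl | hn
  · simp
  refine Real.cos_nonneg_of_neg_pi_div_two_le_of_le (by linarith [Real.pi_pos]) ?_
  rw [div_le_div_iff_of_pos_left Real.pi_pos (by positivity) two_pos]
  exact_mod_cast (by omega : 2 ≤ 2 * n)

/-- Let `A` be the `n × n` matrix with `1`'s on the diagonal and superdiagonal, `-1` in the
lower-left corner, and `0`'s elsewhere. Then the eigenvalues of `A` are
`γ_s = 1 + e^{iπ(2s+1)/n}` for `s = 0, …, n-1`, and the largest singular value of `A`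
(the largest `x ≥ 0` with `x²` an eigenvalue of `Aᴴ A`) is `2 cos(π/(2n))`. -/
theorem stmt_11 {n : ℕ} (hn : 2 ≤ n)
    (A : Matrix (Fin n) (Fin n) ℂ)
    (hA : ∀ j k : Fin n, A j k =
      if (j : ℕ) = (k : ℕ) then 1
      else if (k : ℕ) = (j : ℕ) + 1 then 1
      else if (j : ℕ) = n - 1 ∧ (k : ℕ) = 0 then -1
      else 0) :
    (∀ s : Fin n, ∃ u : Fin n → ℂ, u ≠ 0 ∧
        A.mulVec u =
          (1 + Complex.exp ((Real.pi : ℂ) * Complex.I * (2 * (s : ℕ) + 1) / n)) • u) ∧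
    IsGreatest {x : ℝ | 0 ≤ x ∧ ∃ v : Fin n → ℂ, v ≠ 0 ∧
        (Aᴴ * A).mulVec v = ((x : ℂ) ^ 2) • v}
      (2 * Real.cos (Real.pi / (2 * n))) := by
  have hn0 : n ≠ 0 := by omega
  obtain rfl : A = negacyclicBidiagonal ℂ n := Matrix.ext hA
  set W := vandermonde fun s : Fin n => negacyclicRoot n s
  have hW : IsUnit W := (isUnit_iff_isUnit_det W).mpr
    (det_vandermonde_ne_zero_iff.mpr (negacyclicRoot_injective hn0)).isUnit
  have hW0 : ∀ s, W s ≠ 0 := fun s h => by simpa [W] using congrFun h ⟨0, by omega⟩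
  have hAHA : ∀ s, (_ᴴ * _) *ᵥ W s = ((‖1 + negacyclicRoot n s‖ : ℂ) ^ 2) • W s := fun s =>
    negacyclicBidiagonal.conjTranspose_mul_self_mulVec_powers hn (negacyclicRoot_pow_self hn0 s)
  have hcos := Real.cos_pi_div_two_mul_nonneg n
  refine ⟨fun s => ⟨W s, hW0 s, negacyclicBidiagonal.mulVec_powers hn
    (negacyclicRoot_pow_self hn0 s)⟩, ⟨by positivity, W ⟨0, by omega⟩, hW0 _, ?_⟩, ?_⟩
  · rw [hAHA]
    exact_mod_cast congrArg (· • W ⟨0, by omega⟩) (norm_one_add_negacyclicRoot_zero_sq n)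
  · rintro x ⟨hx, v, hv, hAv⟩
    obtain ⟨s, hs⟩ := exists_eq_of_isUnit_of_rows_mulVec_eq_smul hW hAHA hv hAv
    have hxs : ‖1 + negacyclicRoot n s‖ ^ 2 = x ^ 2 := by exact_mod_cast hs
    exact (pow_le_pow_iff_left₀ hx (by positivity) two_ne_zero).mp
      (hxs ▸ norm_one_add_negacyclicRoot_sq_le s.isLt)
end

section
/- For real unit vectors x_1, x_2, y_1, y_2 in a real inner product space, x_1·y_1 + x_1·y_2 + x_2·y_1 - x_2·y_2 ≤ 2√2, with equality attainable. -/
open scoped RealInnerProductSpace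

/-- Tsirelson's bound in vector form: for real unit vectors `x₁, x₂, y₁, y₂`,
`⟪x₁,y₁⟫ + ⟪x₁,y₂⟫ + ⟪x₂,y₁⟫ - ⟪x₂,y₂⟫ ≤ 2√2`, with equality attainable. -/
theorem stmt_13 :
    (∀ (E : Type) [NormedAddCommGroup E] [InnerProductSpace ℝ E]
      (x₁ x₂ y₁ y₂ : E), ‖x₁‖ = 1 → ‖x₂‖ = 1 → ‖y₁‖ = 1 → ‖y₂‖ = 1 →
      ⟪x₁, y₁⟫ + ⟪x₁, y₂⟫ + ⟪x₂, y₁⟫ - ⟪x₂, y₂⟫ ≤ 2 * Real.sqrt 2) ∧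
    (∃ x₁ x₂ y₁ y₂ : EuclideanSpace ℝ (Fin 2),
      ‖x₁‖ = 1 ∧ ‖x₂‖ = 1 ∧ ‖y₁‖ = 1 ∧ ‖y₂‖ = 1 ∧
      ⟪x₁, y₁⟫ + ⟪x₁, y₂⟫ + ⟪x₂, y₁⟫ - ⟪x₂, y₂⟫ = 2 * Real.sqrt 2) := by
  have hs : Real.sqrt 2 ^ 2 = 2 := Real.sq_sqrt (by norm_num)
  have hsp : (0:ℝ) < Real.sqrt 2 := Real.sqrt_pos.mpr (by norm_num)
  constructor
  · intro E _ _ x₁ x₂ y₁ y₂ hx₁ hx₂ hy₁ hy₂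
    have h1 : ⟪x₁, y₁⟫ + ⟪x₁, y₂⟫ ≤ ‖y₁ + y₂‖ := by
      calc ⟪x₁, y₁⟫ + ⟪x₁, y₂⟫ = ⟪x₁, y₁ + y₂⟫ := (inner_add_right ..).symm
        _ ≤ ‖x₁‖ * ‖y₁ + y₂‖ := real_inner_le_norm _ _
        _ = ‖y₁ + y₂‖ := by rw [hx₁, one_mul]
    have h2 : ⟪x₂, y₁⟫ - ⟪x₂, y₂⟫ ≤ ‖y₁ - y₂‖ := by
      calc ⟪x₂, y₁⟫ - ⟪x₂, y₂⟫ = ⟪x₂, y₁ - y₂⟫ := (inner_sub_right ..).symm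
        _ ≤ ‖x₂‖ * ‖y₁ - y₂‖ := real_inner_le_norm _ _
        _ = ‖y₁ - y₂‖ := by rw [hx₂, one_mul]
    have hpar : ‖y₁ + y₂‖ ^ 2 + ‖y₁ - y₂‖ ^ 2 = 4 := by
      have := norm_add_sq_real y₁ y₂
      have := norm_sub_sq_real y₁ y₂
      nlinarith [hy₁, hy₂]
    have h3 : ‖y₁ + y₂‖ + ‖y₁ - y₂‖ ≤ 2 * Real.sqrt 2 := by
      nlinarith [norm_nonneg (y₁ + y₂), norm_nonneg (y₁ - y₂),
        sq_nonneg (‖y₁ + y₂‖ - ‖y₁ - y₂‖), sq_nonneg (‖y₁ + y₂‖ + ‖y₁ - y₂‖ - 2 * Real.sqrt 2)]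
    linarith
  · refine ⟨(WithLp.equiv 2 _).symm ![Real.sqrt 2 / 2, Real.sqrt 2 / 2],
      (WithLp.equiv 2 _).symm ![Real.sqrt 2 / 2, -(Real.sqrt 2 / 2)],
      (WithLp.equiv 2 _).symm ![1, 0], (WithLp.equiv 2 _).symm ![0, 1], ?_, ?_, ?_, ?_, ?_⟩ <;>
    · simp [EuclideanSpace.norm_eq, PiLp.inner_apply, Fin.sum_univ_two]
      try rw [show Real.sqrt 2 / 2 * (Real.sqrt 2 / 2) + Real.sqrt 2 / 2 * (Real.sqrt 2 / 2) = 1 by nlinarith]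
      try simp

      try nlinarith
end

section
/- Let Λ(ρ) = ∑_m V_m ρ V_m† be a unital quantum channel (∑_m V_m†V_m = I and ∑_m V_mV_m† = I) on a finite-dimensional Hilbert space, and let S be a set of density matrices. Then Λ(ρ) = ρ for all ρ ∈ S if and only if [V_m, ρ] = 0 for all m and all ρ ∈ S. -/
open Matrix
open scoped ComplexOrder

private lemma trace_ct_mul_self_nonneg {d : ℕ} (A : Matrix (Fin d) (Fin d) ℂ) :
    0 ≤ (Aᴴ * A).trace := by
  rw [Matrix.trace]
  refine Finset.sum_nonneg fun i _ => ?_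
  simp only [Matrix.diag_apply, Matrix.mul_apply, Matrix.conjTranspose_apply]
  exact Finset.sum_nonneg fun j _ => star_mul_self_nonneg _

private lemma eq_zero_of_trace_ct_mul_self {d : ℕ} (A : Matrix (Fin d) (Fin d) ℂ)
    (h : (Aᴴ * A).trace = 0) : A = 0 := by
  rw [Matrix.trace] at h
  have key : ∀ i j, (starRingEnd ℂ) (A j i) * A j i = 0 := by
    intro i j
    have hnn : ∀ i ∈ (Finset.univ : Finset (Fin d)), 0 ≤ (Aᴴ * A).diag i := by
      intro i _
      simp only [Matrix.diag_apply, Matrix.mul_apply, Matrix.conjTranspose_apply]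
      exact Finset.sum_nonneg fun j _ => star_mul_self_nonneg _
    have h0 := (Finset.sum_eq_zero_iff_of_nonneg hnn).mp h i (Finset.mem_univ i)
    have h1 : ∑ j, (starRingEnd ℂ) (A j i) * A j i = 0 := by
      simpa [Matrix.diag_apply, Matrix.mul_apply, Matrix.conjTranspose_apply] using h0
    exact (Finset.sum_eq_zero_iff_of_nonneg fun j _ => star_mul_self_nonneg _).mp h1 j
      (Finset.mem_univ j)
  ext j i
  have hz : (Complex.normSq (A j i) : ℂ) = 0 := by
    rw [Complex.normSq_eq_conj_mul_self]; exact key i j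
  exact Complex.normSq_eq_zero.mp (by exact_mod_cast hz)

/-- Hayden–King–Leung: for a unital quantum channel `Λ(ρ) = ∑ V_k ρ V_kᴴ` (trace
preserving: `∑ V_kᴴ V_k = 1`, unital: `∑ V_k V_kᴴ = 1`) and a set `S` of density
matrices, `Λ(ρ) = ρ` for all `ρ ∈ S` iff every Kraus operator commutes with every
`ρ ∈ S`. -/
theorem stmt_15 {d m : ℕ}
    (V : Fin m → Matrix (Fin d) (Fin d) ℂ)
    (htp : ∑ k, (V k)ᴴ * V k = 1)
    (hunital : ∑ k, V k * (V k)ᴴ = 1)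
    (S : Set (Matrix (Fin d) (Fin d) ℂ))
    (hS : ∀ ρ ∈ S, ρ.PosSemidef ∧ ρ.trace = 1) :
    (∀ ρ ∈ S, ∑ k, V k * ρ * (V k)ᴴ = ρ) ↔ (∀ k, ∀ ρ ∈ S, V k * ρ = ρ * V k) := by
  constructor
  · intro hfix k ρ hρS
    obtain ⟨hpsd, -⟩ := hS ρ hρS
    have hρ : ρᴴ = ρ := hpsd.1
    set A : Fin m → Matrix (Fin d) (Fin d) ℂ := fun j => V j * ρ - ρ * V j with hA
    have expand : ∀ j, ((A j)ᴴ * A j).trace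
        = ((V j)ᴴ * V j * (ρ * ρ)).trace - ((V j * ρ * (V j)ᴴ) * ρ).trace
          - (ρ * (V j * ρ * (V j)ᴴ)).trace + (V j * (V j)ᴴ * (ρ * ρ)).trace := by
      intro j
      have e1 : (A j)ᴴ * A j
          = ρ * ((V j)ᴴ * (V j * ρ)) - ρ * ((V j)ᴴ * (ρ * V j))
            - ((V j)ᴴ * (ρ * (V j * ρ)) - (V j)ᴴ * (ρ * (ρ * V j))) := by
        simp only [hA, Matrix.conjTranspose_sub, Matrix.conjTranspose_mul, hρ,
          Matrix.sub_mul, Matrix.mul_sub, Matrix.mul_assoc]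
        abel
      have t1 : (ρ * ((V j)ᴴ * (V j * ρ))).trace = ((V j)ᴴ * V j * (ρ * ρ)).trace := by
        rw [Matrix.trace_mul_comm]
        congr 1
        simp only [Matrix.mul_assoc]
      have t2 : (ρ * ((V j)ᴴ * (ρ * V j))).trace = ((V j * ρ * (V j)ᴴ) * ρ).trace := by
        rw [show ρ * ((V j)ᴴ * (ρ * V j)) = (ρ * (V j)ᴴ * ρ) * V j by
          simp only [Matrix.mul_assoc], Matrix.trace_mul_comm]
        congr 1
        simp only [Matrix.mul_assoc]
      have t3 : ((V j)ᴴ * (ρ * (V j * ρ))).trace = (ρ * (V j * ρ * (V j)ᴴ)).trace := by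
        rw [Matrix.trace_mul_comm]
        congr 1
        simp only [Matrix.mul_assoc]
      have t4 : ((V j)ᴴ * (ρ * (ρ * V j))).trace = (V j * (V j)ᴴ * (ρ * ρ)).trace := by
        rw [show (V j)ᴴ * (ρ * (ρ * V j)) = ((V j)ᴴ * (ρ * ρ)) * V j by
          simp only [Matrix.mul_assoc], Matrix.trace_mul_comm]
        congr 1
        simp only [Matrix.mul_assoc]
      rw [e1, Matrix.trace_sub, Matrix.trace_sub, Matrix.trace_sub, t1, t2, t3, t4]
      ring
    have hsum : ∑ j, ((A j)ᴴ * A j).trace = 0 := by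
      simp only [expand]
      rw [Finset.sum_add_distrib, Finset.sum_sub_distrib, Finset.sum_sub_distrib,
        ← Matrix.trace_sum, ← Matrix.trace_sum, ← Matrix.trace_sum, ← Matrix.trace_sum,
        ← Finset.sum_mul, ← Finset.sum_mul, ← Finset.mul_sum, ← Finset.sum_mul,
        htp, hunital, hfix ρ hρS, Matrix.one_mul]
      ring
    have hzero : ((A k)ᴴ * A k).trace = 0 :=
      (Finset.sum_eq_zero_iff_of_nonneg fun j _ => trace_ct_mul_self_nonneg (A j)).mp hsum k
        (Finset.mem_univ k)
    have h0 : V k * ρ - ρ * V k = 0 := eq_zero_of_trace_ct_mul_self (A k) hzero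
    exact sub_eq_zero.mp h0
  · intro hcomm ρ hρS
    calc ∑ k, V k * ρ * (V k)ᴴ = ∑ k, ρ * (V k * (V k)ᴴ) := by
          refine Finset.sum_congr rfl fun k _ => ?_
          rw [hcomm k ρ hρS, Matrix.mul_assoc]
      _ = ρ := by rw [← Finset.mul_sum, hunital, mul_one]
end

section
/- Let M be a POVM element and P a projector on a finite-dimensional Hilbert space. If Tr(MPM(I-P)) = 0 then [M, P] = 0. -/
open scoped ComplexOrder

open Matrix in
lemma aux_trace_zero {n : ℕ} (A : Matrix (Fin n) (Fin n) ℂ)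
    (h : (Aᴴ * A).trace = 0) : A = 0 := by
  have h' : ∑ i, ∑ j, Complex.normSq (A j i) = 0 := by
    have : (Aᴴ * A).trace = ((∑ i, ∑ j, Complex.normSq (A j i) : ℝ) : ℂ) := by
      simp only [Matrix.trace, Matrix.diag, Matrix.mul_apply, Matrix.conjTranspose_apply]
      push_cast
      refine Finset.sum_congr rfl fun i _ => Finset.sum_congr rfl fun j _ => ?_
      simp [Complex.star_def, mul_comm, Complex.mul_conj]
    rw [this] at h
    exact_mod_cast h
  ext i j
  have h2 := (Finset.sum_eq_zero_iff_of_nonneg (fun i _ => Finset.sum_nonneg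
    (fun j _ => Complex.normSq_nonneg (A j i)))).mp h' j (Finset.mem_univ _)
  have h3 := (Finset.sum_eq_zero_iff_of_nonneg
    (fun k _ => Complex.normSq_nonneg (A k j))).mp h2 i (Finset.mem_univ _)
  simpa [Complex.normSq_eq_zero] using h3

open Matrix in
/-- If `M` is a POVM element (positive semidefinite) and `P` a projector with
`Tr(M P M (I - P)) = 0`, then `M` and `P` commute. -/
theorem stmt_16 {d : ℕ}
    (M P : Matrix (Fin d) (Fin d) ℂ)
    (hM : M.PosSemidef)
    (hP : P.IsHermitian) (hP2 : P * P = P)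
    (h : (M * P * M * (1 - P)).trace = 0) :
    M * P = P * M := by
  have hMH : Mᴴ = M := hM.isHermitian.eq
  have key : (M * P * M).trace = (M * P * M * P).trace := by
    have hsplit : M * P * M * (1 - P) = M * P * M - M * P * M * P := by noncomm_ring
    rw [hsplit, Matrix.trace_sub, sub_eq_zero] at h
    exact h
  set C := M * P - P * M with hC
  have hCH : Cᴴ = P * M - M * P := by
    simp [hC, Matrix.conjTranspose_sub, Matrix.conjTranspose_mul, hMH, hP.eq]
  have hexp : Cᴴ * C = P * M * M * P - P * M * P * M - M * P * M * P + M * (P * P) * M := by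
    rw [hCH, hC]; noncomm_ring
  have e1 : (P * M * M * P).trace = (M * P * M).trace := by
    rw [show P * M * M * P = P * (M * M * P) from by noncomm_ring, Matrix.trace_mul_comm,
      show M * M * P * P = M * (M * P) from by rw [mul_assoc, mul_assoc, hP2],
      Matrix.trace_mul_comm]
  have e2 : (P * M * P * M).trace = (M * P * M).trace := by
    rw [show P * M * P * M = P * (M * P * M) from by noncomm_ring, Matrix.trace_mul_comm, ← key]
  have ht : (Cᴴ * C).trace = 0 := by
    rw [hexp, hP2, Matrix.trace_add, Matrix.trace_sub, Matrix.trace_sub, e1, e2, ← key]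
    ring
  have hz : C = 0 := aux_trace_zero C ht
  have : M * P - P * M = 0 := hz
  have := sub_eq_zero.mp this
  exact this
end

section
/- For any two projectors Q_0, Q_1 on C^d with Q_0 + Q_1 = I (so Q_1 = I - Q_0), and any other projector R_0 on C^d with rank(R_0) = rank(Q_0), there exists a direct sum decomposition C^d = ⊕_i H_i with dim H_i ≤ 2 such that both Q_0 and R_0 decompose block-diagonally: Q_0 = ∑_i Π_i Q_0 Π_i and R_0 = ∑_i Π_i R_0 Π_i, where Π_i projects onto H_i. -/
open Module Submodule Matrix

section Aux

variable {E : Type*} [NormedAddCommGroup E] [InnerProductSpace ℂ E] [FiniteDimensional ℂ E]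

private lemma finrank_span_singleton_le' (x : E) :
    Module.finrank ℂ (span ℂ ({x} : Set E)) ≤ 1 := by
  by_cases hx : x = 0
  · rw [hx, Submodule.span_zero_singleton]
    simp
  · exact le_of_eq (finrank_span_singleton hx)

private lemma finrank_span_pair_le (x y : E) :
    Module.finrank ℂ (span ℂ ({x, y} : Set E)) ≤ 2 := by
  have hins : span ℂ ({x, y} : Set E) = span ℂ {x} ⊔ span ℂ {y} :=
    Submodule.span_insert x {y}
  rw [hins]
  have h0 := Submodule.finrank_sup_add_finrank_inf_eq (span ℂ {x}) (span ℂ {y} : Submodule ℂ E)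
  have h1 := finrank_span_singleton_le' x
  have h2 := finrank_span_singleton_le' (y)
  omega

/-- Existence of a common invariant subspace of dimension between 1 and 2 inside an
invariant subspace `V ≠ ⊥`, for two idempotent operators. -/
private lemma exists_invariant_plane (q r : E →ₗ[ℂ] E)
    (hq2 : ∀ x, q (q x) = q x) (hr2 : ∀ x, r (r x) = r x)
    (V : Submodule ℂ E) (hV : V ≠ ⊥)
    (hqV : ∀ x ∈ V, q x ∈ V) (hrV : ∀ x ∈ V, r x ∈ V) :
    ∃ W : Submodule ℂ E, W ≠ ⊥ ∧ W ≤ V ∧ Module.finrank ℂ W ≤ 2 ∧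
      (∀ x ∈ W, q x ∈ W) ∧ (∀ x ∈ W, r x ∈ W) := by
  classical
  set F : Submodule ℂ E := V ⊓ LinearMap.ker (q - LinearMap.id) with hF
  have memF : ∀ x, x ∈ F ↔ x ∈ V ∧ q x = x := by
    intro x
    simp [hF, LinearMap.mem_ker, sub_eq_zero]
  by_cases hFbot : F = ⊥
  · -- q vanishes on V
    have hq0 : ∀ x ∈ V, q x = 0 := by
      intro x hx
      have : q x ∈ F := (memF (q x)).mpr ⟨hqV x hx, hq2 x⟩
      rw [hFbot] at this; simpa using this
    obtain ⟨x, hxV, hx0⟩ := Submodule.exists_mem_ne_zero_of_ne_bot hV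
    by_cases hrx : r x = 0
    · refine ⟨span ℂ {x}, ?_, ?_, ?_, ?_, ?_⟩
      · simpa using hx0
      · rwa [Submodule.span_singleton_le_iff_mem]
      · exact (finrank_span_singleton_le' x).trans one_le_two
      · intro y hy
        obtain ⟨c, rfl⟩ := Submodule.mem_span_singleton.mp hy
        have : q (c • x) = 0 := by rw [LinearMap.map_smul, hq0 x hxV, smul_zero]
        rw [this]; exact Submodule.zero_mem _
      · intro y hy
        obtain ⟨c, rfl⟩ := Submodule.mem_span_singleton.mp hy
        have : r (c • x) = 0 := by rw [LinearMap.map_smul, hrx, smul_zero]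
        rw [this]; exact Submodule.zero_mem _
    · set v := r x with hv
      have hvV : v ∈ V := hrV x hxV
      have hrv : r v = v := hr2 x
      refine ⟨span ℂ {v}, ?_, ?_, ?_, ?_, ?_⟩
      · simpa using hrx
      · rwa [Submodule.span_singleton_le_iff_mem]
      · exact (finrank_span_singleton_le' v).trans one_le_two
      · intro y hy
        obtain ⟨c, rfl⟩ := Submodule.mem_span_singleton.mp hy
        have : q (c • v) = 0 := by rw [LinearMap.map_smul, hq0 v hvV, smul_zero]
        rw [this]; exact Submodule.zero_mem _
      · intro y hy
        obtain ⟨c, rfl⟩ := Submodule.mem_span_singleton.mp hy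
        have : r (c • v) = c • v := by rw [LinearMap.map_smul, hrv]
        rw [this]; exact Submodule.smul_mem _ _ (Submodule.mem_span_singleton_self v)
  · -- F ≠ ⊥ : take an eigenvector of (q ∘ r) restricted to F
    have hmaps : ∀ x ∈ F, (q ∘ₗ r) x ∈ F := by
      intro x hx
      obtain ⟨hxV, -⟩ := (memF x).mp hx
      exact (memF _).mpr ⟨hqV _ (hrV _ hxV), hq2 _⟩
    let T : F →ₗ[ℂ] F := (q ∘ₗ r).restrict hmaps
    haveI : Nontrivial F := Submodule.nontrivial_iff_ne_bot.mpr hFbot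
    obtain ⟨μ, hμ⟩ := Module.End.exists_eigenvalue (T : Module.End ℂ F)
    obtain ⟨v, hv⟩ := hμ.exists_hasEigenvector
    have hv0 : (v : E) ≠ 0 := fun h => hv.2 (Subtype.ext h)
    have hvF : (v : E) ∈ F := v.2
    obtain ⟨hvV, hqv⟩ := (memF _).mp hvF
    have hqrv : q (r (v : E)) = μ • (v : E) := by
      have h2 : T v = μ • v := hv.apply_eq_smul
      have h3 := congrArg (Subtype.val) h2
      simpa [T, LinearMap.restrict_apply] using h3
    set w : E := (v : E) with hw
    have hwmem : w ∈ span ℂ ({w, r w} : Set E) :=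
      Submodule.subset_span (Set.mem_insert _ _)
    have hrwmem : r w ∈ span ℂ ({w, r w} : Set E) :=
      Submodule.subset_span (Set.mem_insert_of_mem _ rfl)
    refine ⟨span ℂ ({w, r w} : Set E), ?_, ?_, finrank_span_pair_le w (r w), ?_, ?_⟩
    · intro h
      apply hv0
      have : w ∈ (⊥ : Submodule ℂ E) := h ▸ hwmem
      simpa using this
    · rw [Submodule.span_le]
      rintro z (rfl | rfl)
      · exact hvV
      · exact hrV _ hvV
    · -- q-invariance
      intro y hy
      obtain ⟨c, dd, hcd⟩ := Submodule.mem_span_pair.mp hy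
      have : q y = (c + dd * μ) • w := by
        rw [← hcd, map_add, LinearMap.map_smul, LinearMap.map_smul, hqv, hqrv,
          smul_smul, add_smul]
      rw [this]
      exact Submodule.smul_mem _ _ hwmem
    · -- r-invariance
      intro y hy
      obtain ⟨c, dd, hcd⟩ := Submodule.mem_span_pair.mp hy
      have : r y = (c + dd) • (r w) := by
        rw [← hcd, map_add, LinearMap.map_smul, LinearMap.map_smul, hr2, add_smul]
      rw [this]
      exact Submodule.smul_mem _ _ hrwmem

/-- The main decomposition lemma, by induction on the dimension of `V`. -/
private lemma exists_decomp (q r : E →ₗ[ℂ] E)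
    (hq : q.IsSymmetric) (hr : r.IsSymmetric)
    (hq2 : ∀ x, q (q x) = q x) (hr2 : ∀ x, r (r x) = r x) :
    ∀ (n : ℕ) (V : Submodule ℂ E), Module.finrank ℂ V ≤ n →
      (∀ x ∈ V, q x ∈ V) → (∀ x ∈ V, r x ∈ V) →
      ∃ (m : ℕ) (W : Fin m → Submodule ℂ E),
        (∀ i, W i ≤ V) ∧ (∀ i, Module.finrank ℂ (W i) ≤ 2) ∧
        (∀ i j, i ≠ j → W i ≤ (W j)ᗮ) ∧
        (∀ i, ∀ x ∈ W i, q x ∈ W i) ∧ (∀ i, ∀ x ∈ W i, r x ∈ W i) ∧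
        (∀ x ∈ V, ∑ i, ((orthogonalProjection (W i) x : E)) = x) := by
  intro n
  induction n with
  | zero =>
    intro V hV _ _
    have hVbot : V = ⊥ := Submodule.finrank_eq_zero.mp (Nat.le_zero.mp hV)
    refine ⟨0, Fin.elim0, fun i => i.elim0, fun i => i.elim0, fun i j _ => i.elim0,
      fun i => i.elim0, fun i => i.elim0, ?_⟩
    intro x hx
    rw [hVbot] at hx
    simpa using hx.symm
  | succ n ih =>
    intro V hV hqV hrV
    by_cases hVbot : V = ⊥
    · refine ⟨0, Fin.elim0, fun i => i.elim0, fun i => i.elim0, fun i j _ => i.elim0,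
        fun i => i.elim0, fun i => i.elim0, ?_⟩
      intro x hx
      rw [hVbot] at hx
      simpa using hx.symm
    · obtain ⟨W, hWbot, hWV, hWrk, hqW, hrW⟩ :=
        exists_invariant_plane q r hq2 hr2 V hVbot hqV hrV
      set V' : Submodule ℂ E := Wᗮ ⊓ V with hV'
      have hsup : W ⊔ V' = V := Submodule.sup_orthogonal_inf_of_hasOrthogonalProjection hWV
      have hWV'bot : W ⊓ V' = ⊥ := by
        rw [hV', ← inf_assoc]
        simp [Submodule.inf_orthogonal_eq_bot]
      have hrkV' : Module.finrank ℂ V' ≤ n := by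
        have h0 := Submodule.finrank_sup_add_finrank_inf_eq W V'
        rw [hsup, hWV'bot] at h0
        have hWpos : 0 < Module.finrank ℂ W :=
          Module.finrank_pos_iff.mpr (Submodule.nontrivial_iff_ne_bot.mpr hWbot)
        simp only [finrank_bot] at h0
        omega
      have hqV' : ∀ x ∈ V', q x ∈ V' := by
        intro x hx
        obtain ⟨hx1, hx2⟩ := hx
        refine ⟨?_, hqV x hx2⟩
        intro u hu
        calc inner (𝕜 := ℂ) u (q x) = inner (𝕜 := ℂ) (q u) x := (hq u x).symm
        _ = 0 := hx1 _ (hqW u hu)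
      have hrV' : ∀ x ∈ V', r x ∈ V' := by
        intro x hx
        obtain ⟨hx1, hx2⟩ := hx
        refine ⟨?_, hrV x hx2⟩
        intro u hu
        calc inner (𝕜 := ℂ) u (r x) = inner (𝕜 := ℂ) (r u) x := (hr u x).symm
        _ = 0 := hx1 _ (hrW u hu)
      obtain ⟨m, W', h1, h2, h3, h4, h5, h6⟩ := ih V' hrkV' hqV' hrV'
      have hW'le : ∀ i, W' i ≤ Wᗮ := fun i => le_trans (h1 i) inf_le_left
      have hWle : ∀ i, W ≤ (W' i)ᗮ := fun i =>
        le_trans (Submodule.le_orthogonal_orthogonal W) (Submodule.orthogonal_le (hW'le i))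
      refine ⟨m + 1, Fin.cons W W', ?_, ?_, ?_, ?_, ?_, ?_⟩
      · intro i
        obtain rfl | ⟨k, rfl⟩ := i.eq_zero_or_eq_succ
        · simpa using hWV
        · simpa using le_trans (h1 k) inf_le_right
      · intro i
        obtain rfl | ⟨k, rfl⟩ := i.eq_zero_or_eq_succ
        · exact hWrk
        · exact h2 k
      · intro i j hij
        obtain rfl | ⟨k, rfl⟩ := i.eq_zero_or_eq_succ <;>
          obtain rfl | ⟨l, rfl⟩ := j.eq_zero_or_eq_succ
        · exact absurd rfl hij
        · simpa using hWle l
        · simpa using hW'le k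
        · have hkl : k ≠ l := fun h => hij (by rw [h])
          simpa using h3 k l hkl
      · intro i
        obtain rfl | ⟨k, rfl⟩ := i.eq_zero_or_eq_succ
        · simpa using hqW
        · simpa using h4 k
      · intro i
        obtain rfl | ⟨k, rfl⟩ := i.eq_zero_or_eq_succ
        · simpa using hrW
        · simpa using h5 k
      · intro x hx
        set w : E := (orthogonalProjection W x : E) with hweq
        have hwW : w ∈ W := (orthogonalProjection W x).2
        have hyWperp : x - w ∈ Wᗮ := sub_starProjection_mem_orthogonal x
        set y : E := x - w with hyeq
        have hyV' : y ∈ V' := ⟨hyWperp, Submodule.sub_mem V hx (hWV hwW)⟩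
        have hxy : x = w + y := by simp [hyeq]
        rw [Fin.sum_univ_succ]
        have hterm : ∀ j : Fin m, (orthogonalProjection (W' j) x : E) =
            (orthogonalProjection (W' j) y : E) := by
          intro j
          have hz : orthogonalProjection (W' j) w = 0 :=
            Submodule.orthogonalProjectionOnto_apply_of_mem_orthogonal (hWle j hwW)
          rw [hxy, map_add, hz]
          simp
        have hsucc : ∀ j : Fin m,
            ((orthogonalProjection (Fin.cons (α := fun _ => Submodule ℂ E) W W' j.succ) x : E))
              = (orthogonalProjection (W' j) y : E) := by
          intro j
          rw [Fin.cons_succ]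
          exact hterm j
        rw [show (Fin.cons (α := fun _ => Submodule ℂ E) W W' 0) = W from rfl,
          Finset.sum_congr rfl fun j _ => hsucc j, h6 y hyV']
        exact hxy.symm

end Aux

section MatrixSide

variable {d : ℕ}

private noncomputable def projMap (K : Submodule ℂ (EuclideanSpace ℂ (Fin d))) :
    EuclideanSpace ℂ (Fin d) →ₗ[ℂ] EuclideanSpace ℂ (Fin d) :=
  (K.subtypeL ∘L orthogonalProjection K :
    EuclideanSpace ℂ (Fin d) →L[ℂ] EuclideanSpace ℂ (Fin d))

private lemma toEuclideanLin_mul (A B : Matrix (Fin d) (Fin d) ℂ) :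
    Matrix.toEuclideanLin (A * B) =
      (Matrix.toEuclideanLin A) ∘ₗ (Matrix.toEuclideanLin B) := by
  ext x
  simp [Matrix.toEuclideanLin_apply, Matrix.mulVec_mulVec]

private lemma toEuclideanLin_one :
    Matrix.toEuclideanLin (1 : Matrix (Fin d) (Fin d) ℂ) = LinearMap.id := by
  ext x
  simp [Matrix.toEuclideanLin_apply]

end MatrixSide

/-- Simultaneous block-diagonalization of two projectors: for any two Hermitian projectors
`Q` and `R` on `ℂ^d` (here with `rank R = rank Q`), there is a decomposition of `ℂ^d` into
pairwise orthogonal subspaces of dimension at most 2, given by orthogonal projectors `Pj i`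
summing to the identity, with respect to which both `Q` and `R` are block diagonal. -/
theorem stmt_17 {d : ℕ}
    (Q R : Matrix (Fin d) (Fin d) ℂ)
    (hQ : Q.IsHermitian) (hQ2 : Q * Q = Q)
    (hR : R.IsHermitian) (hR2 : R * R = R)
    (hrank : R.rank = Q.rank) :
    ∃ (m : ℕ) (Pj : Fin m → Matrix (Fin d) (Fin d) ℂ),
      (∀ i, (Pj i).IsHermitian) ∧ (∀ i, Pj i * Pj i = Pj i) ∧
      (∀ i, (Pj i).rank ≤ 2) ∧
      (∀ i j, i ≠ j → Pj i * Pj j = 0) ∧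
      (∑ i, Pj i = 1) ∧
      Q = ∑ i, Pj i * Q * Pj i ∧
      R = ∑ i, Pj i * R * Pj i := by
  classical
  set E := EuclideanSpace ℂ (Fin d)
  set q : E →ₗ[ℂ] E := Matrix.toEuclideanLin Q with hqdef
  set r : E →ₗ[ℂ] E := Matrix.toEuclideanLin R with hrdef
  have hq : q.IsSymmetric := (Matrix.isHermitian_iff_isSymmetric).mp hQ
  have hr : r.IsSymmetric := (Matrix.isHermitian_iff_isSymmetric).mp hR
  have hq2 : ∀ x, q (q x) = q x := by
    intro x
    have h := congrArg (fun M => Matrix.toEuclideanLin M x) hQ2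
    simpa [toEuclideanLin_mul] using h
  have hr2 : ∀ x, r (r x) = r x := by
    intro x
    have h := congrArg (fun M => Matrix.toEuclideanLin M x) hR2
    simpa [toEuclideanLin_mul] using h
  obtain ⟨m, W, hle, hrk, horth, hqW, hrW, hsum⟩ :=
    exists_decomp q r hq hr hq2 hr2 (Module.finrank ℂ (⊤ : Submodule ℂ E)) ⊤ le_rfl
      (fun x _ => trivial) (fun x _ => trivial)
  set f : Fin m → (E →ₗ[ℂ] E) := fun i => projMap (W i) with hfdef
  have hfsymm : ∀ i, (f i).IsSymmetric := fun i =>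
    (ContinuousLinearMap.isSelfAdjoint_iff_isSymmetric.mp
      (isSelfAdjoint_starProjection (W i)))
  have hfcoe : ∀ i x, f i x = (orthogonalProjection (W i) x : E) := fun _ _ => rfl
  have hfmem : ∀ i x, f i x ∈ W i := fun i x => (orthogonalProjection (W i) x).2
  have hffix : ∀ i, ∀ x, x ∈ W i → f i x = x := by
    intro i x hx
    have h : orthogonalProjection (W i) x = ⟨x, hx⟩ :=
      orthogonalProjection_mem_subspace_eq_self (⟨x, hx⟩ : W i)
    rw [hfcoe, h]
  have hfzero : ∀ i, ∀ x, x ∈ (W i)ᗮ → f i x = 0 := by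
    intro i x hx
    have h : orthogonalProjection (W i) x = 0 :=
      Submodule.orthogonalProjectionOnto_apply_of_mem_orthogonal hx
    rw [hfcoe, h]; rfl
  have hfsum : ∀ x : E, ∑ i, f i x = x := by
    intro x
    rw [Finset.sum_congr rfl fun i _ => hfcoe i x]
    exact hsum x trivial
  set Pj : Fin m → Matrix (Fin d) (Fin d) ℂ :=
    fun i => Matrix.toEuclideanLin.symm (f i) with hPjdef
  have hPlin : ∀ i, Matrix.toEuclideanLin (Pj i) = f i := fun i =>
    Matrix.toEuclideanLin.apply_symm_apply (f i)
  refine ⟨m, Pj, ?_, ?_, ?_, ?_, ?_, ?_, ?_⟩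
  · intro i
    rw [Matrix.isHermitian_iff_isSymmetric, hPlin]
    exact hfsymm i
  · intro i
    apply Matrix.toEuclideanLin.injective
    rw [toEuclideanLin_mul, hPlin]
    refine LinearMap.ext fun x => ?_
    exact hffix i (f i x) (hfmem i x)
  · intro i
    have hrkeq : (Pj i).rank =
        Module.finrank ℂ (LinearMap.range (Matrix.toEuclideanLin (Pj i))) := by
      rw [Matrix.toEuclideanLin_eq_toLin]
      exact (Pj i).rank_eq_finrank_range_toLin _ _
    rw [hrkeq, hPlin]
    have hle' : LinearMap.range (f i) ≤ W i := by
      rintro y ⟨x, rfl⟩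
      exact hfmem i x
    exact le_trans (Submodule.finrank_mono hle') (hrk i)
  · intro i j hij
    apply Matrix.toEuclideanLin.injective
    rw [toEuclideanLin_mul, hPlin, hPlin]
    refine LinearMap.ext fun x => ?_
    have hmem : f j x ∈ (W i)ᗮ := horth j i (Ne.symm hij) (hfmem j x)
    simp [hfzero i _ hmem]
  · apply Matrix.toEuclideanLin.injective
    rw [map_sum, toEuclideanLin_one]
    refine LinearMap.ext fun x => ?_
    simp only [LinearMap.coe_sum, Finset.sum_apply, LinearMap.id_apply, hPlin]
    exact hfsum x
  · apply Matrix.toEuclideanLin.injective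
    rw [map_sum]
    refine LinearMap.ext fun x => ?_
    simp only [LinearMap.coe_sum, Finset.sum_apply, toEuclideanLin_mul, hPlin,
      LinearMap.comp_apply, ← hqdef]
    have hfix : ∀ i : Fin m, f i (q (f i x)) = q (f i x) := fun i =>
      hffix i _ (hqW i _ (hfmem i x))
    calc q x = q (∑ i, f i x) := by rw [hfsum x]
    _ = ∑ i, q (f i x) := map_sum q _ _
    _ = ∑ i, f i (q (f i x)) := (Finset.sum_congr rfl fun i _ => (hfix i).symm)
  · apply Matrix.toEuclideanLin.injective
    rw [map_sum]
    refine LinearMap.ext fun x => ?_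
    simp only [LinearMap.coe_sum, Finset.sum_apply, toEuclideanLin_mul, hPlin,
      LinearMap.comp_apply, ← hrdef]
    have hfix : ∀ i : Fin m, f i (r (f i x)) = r (f i x) := fun i =>
      hffix i _ (hrW i _ (hfmem i x))
    calc r x = r (∑ i, f i x) := by rw [hfsum x]
    _ = ∑ i, r (f i x) := map_sum r _ _
    _ = ∑ i, f i (r (f i x)) := (Finset.sum_congr rfl fun i _ => (hfix i).symm)
end

section
/- Let ρ_{XE} = ∑_{x∈{0,1}^n} 2^{-n} |x⟩⟨x| ⊗ (ρ_{E_1}^{x_1} ⊗ ... ⊗ ρ_{E_n}^{x_n}) be a cq-state where each bit x_i is encoded independently in register E_i. Then the maximal probability of guessing the full string x by a measurement on E equals the product ∏_{i=1}^n P_g(X_i | ρ_{E_i}) of the single-register guessing probabilities, and is achieved by measuring each register separately. -/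
/-!
The guessing probability is the value of a semidefinite program: maximise `∑ₓ tr (Mₓ σₓ)` over
measurements `M`, with dual program: minimise `tr Q` subject to `Q ≥ σₓ` for all `x`. Weak duality
bounds every success probability by `tr Q`. For a single bit, the Helstrom measurement
(projecting onto the nonnegative part of `σ₀ - σ₁`) and an explicit dual point have equal values.
For independently encoded bits the Kronecker products of these optimal primal and dual points
are again feasible, because the Kronecker product is monotone on positive matrices, and their
values are both the product of the single-register values.
-/

open scoped ComplexOrder MatrixOrder

open Finset

theorem Complex.re_prod_of_nonneg {ι : Type*} (s : Finset ι) {z : ι → ℂ} (hz : ∀ i ∈ s, 0 ≤ z i) :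
    (∏ i ∈ s, z i).re = ∏ i ∈ s, (z i).re := by
  rw [prod_congr rfl fun i hi => eq_re_of_ofReal_le (r := 0) (by simpa using hz i hi),
    ← ofReal_prod, ofReal_re]

namespace Matrix

section piKron

variable {ι R : Type*} [Fintype ι] {m n p : ι → Type*}

def piKron [CommSemiring R] (A : (i : ι) → Matrix (m i) (n i) R) :
    Matrix ((i : ι) → m i) ((i : ι) → n i) R :=
  of fun k l => ∏ i, A i (k i) (l i)

@[simp]
theorem piKron_apply [CommSemiring R] (A : (i : ι) → Matrix (m i) (n i) R) (k : (i : ι) → m i)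
    (l : (i : ι) → n i) : piKron A k l = ∏ i, A i (k i) (l i) :=
  rfl

theorem piKron_mul [CommSemiring R] [DecidableEq ι] [∀ i, Fintype (n i)]
    (A : (i : ι) → Matrix (m i) (n i) R) (B : (i : ι) → Matrix (n i) (p i) R) :
    piKron A * piKron B = piKron fun i => A i * B i := by
  ext k l
  simp only [mul_apply, piKron_apply, Fintype.prod_sum, prod_mul_distrib]

theorem trace_piKron [CommSemiring R] [DecidableEq ι] [∀ i, Fintype (m i)]
    (A : (i : ι) → Matrix (m i) (m i) R) : (piKron A).trace = ∏ i, (A i).trace := by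
  simp only [trace, diag, piKron_apply, Fintype.prod_sum]

theorem conjTranspose_piKron [CommSemiring R] [StarRing R] (A : (i : ι) → Matrix (m i) (n i) R) :
    (piKron A)ᴴ = piKron fun i => (A i)ᴴ := by
  ext k l
  simp [conjTranspose_apply]

theorem piKron_one [CommSemiring R] [∀ i, DecidableEq (m i)] :
    piKron (fun i => (1 : Matrix (m i) (m i) R)) = 1 := by
  ext k l
  by_cases h : k = l
  · subst h
    simp
  · obtain ⟨i, hi⟩ := Function.ne_iff.mp h
    rw [piKron_apply, one_apply_ne h]
    exact Finset.prod_eq_zero (Finset.mem_univ i) (one_apply_ne hi)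

theorem piKron_smul [CommSemiring R] (c : ι → R) (A : (i : ι) → Matrix (m i) (n i) R) :
    (piKron fun i => c i • A i) = (∏ i, c i) • piKron A := by
  ext k l
  simp [prod_mul_distrib]

theorem piKron_sum [CommSemiring R] [DecidableEq ι] {κ : ι → Type*} [∀ i, Fintype (κ i)]
    (A : (i : ι) → κ i → Matrix (m i) (n i) R) :
    (piKron fun i => ∑ b, A i b) = ∑ x : (i : ι) → κ i, piKron fun i => A i (x i) := by
  ext k l
  simp only [piKron_apply, sum_apply, Fintype.prod_sum]

variable {𝕜 : Type*} [RCLike 𝕜] [∀ i, Fintype (m i)]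

theorem PosSemidef.piKron [DecidableEq ι] [∀ i, DecidableEq (m i)]
    {A : (i : ι) → Matrix (m i) (m i) 𝕜} (hA : ∀ i, (A i).PosSemidef) : (piKron A).PosSemidef := by
  choose B hB using fun i => CStarAlgebra.nonneg_iff_eq_star_mul_self.mp (hA i).nonneg
  simp only [star_eq_conjTranspose] at hB
  rw [funext hB, ← piKron_mul, ← conjTranspose_piKron]
  exact posSemidef_conjTranspose_mul_self _

/-- Expanding `A i = B i + (A i - B i)` multilinearly writes `piKron A` as `piKron B` plus a sum
of Kronecker products of positive semidefinite matrices. -/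
theorem posSemidef_piKron_sub_piKron [DecidableEq ι] [∀ i, DecidableEq (m i)]
    {A B : (i : ι) → Matrix (m i) (m i) 𝕜}
    (hB : ∀ i, (B i).PosSemidef) (hAB : ∀ i, (A i - B i).PosSemidef) :
    (piKron A - piKron B).PosSemidef := by
  set F : (i : ι) → Bool → Matrix (m i) (m i) 𝕜 := fun i b => if b then A i - B i else B i
  have hF : ∀ i b, (F i b).PosSemidef := fun i b => by cases b <;> simp [F, hB, hAB]
  have hA : A = fun i => ∑ b, F i b := funext fun i => by simp [F]
  rw [hA, piKron_sum,
    ← add_sum_erase univ (fun x => piKron fun i => F i (x i)) (mem_univ fun _ => false)]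
  have hfalse : (piKron fun i => F i false) = piKron B := by simp [F]
  rw [hfalse, add_sub_cancel_left]
  exact posSemidef_sum _ fun x _ => PosSemidef.piKron fun i => hF i (x i)

theorem re_trace_piKron_of_posSemidef [DecidableEq ι] {Q : (i : ι) → Matrix (m i) (m i) ℂ}
    (hQ : ∀ i, (Q i).PosSemidef) :
    (piKron Q).trace.re = ∏ i, (Q i).trace.re := by
  rw [trace_piKron, Complex.re_prod_of_nonneg _ fun i _ => (hQ i).trace_nonneg]

end piKron

section

variable {m : Type*} [Fintype m]

theorem PosSemidef.trace_mul_nonneg [DecidableEq m] {A B : Matrix m m ℂ} (hA : A.PosSemidef)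
    (hB : B.PosSemidef) : 0 ≤ (A * B).trace := by
  obtain ⟨C, rfl⟩ := CStarAlgebra.nonneg_iff_eq_star_mul_self.mp hB.nonneg
  rw [star_eq_conjTranspose, ← Matrix.mul_assoc, trace_mul_comm, ← Matrix.mul_assoc]
  exact (hA.mul_mul_conjTranspose_same C).trace_nonneg

theorem re_trace_mul_ofReal_smul (A B : Matrix m m ℂ) (r : ℝ) :
    (A * ((r : ℂ) • B)).trace.re = r * (A * B).trace.re := by
  rw [Matrix.mul_smul, trace_smul, smul_eq_mul, Complex.re_ofReal_mul]

end

end Matrix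

open Matrix

section Guessing

variable {X m : Type*} [Fintype X] [Fintype m]

def guessProb (P : X → ℝ) (ρ M : X → Matrix m m ℂ) : ℝ :=
  ∑ x, P x * ((M x * ρ x).trace).re

variable [DecidableEq m]

def guessProbs (P : X → ℝ) (ρ : X → Matrix m m ℂ) : Set ℝ :=
  {p | ∃ M : X → Matrix m m ℂ, (∀ x, (M x).PosSemidef) ∧ ∑ x, M x = 1 ∧ p = guessProb P ρ M}

theorem guessProbs_bool (P : Bool → ℝ) (ρ : Bool → Matrix m m ℂ) :
    guessProbs P ρ = {p | ∃ M : Bool → Matrix m m ℂ, (∀ b, (M b).PosSemidef) ∧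
      M false + M true = 1 ∧ p = ∑ b, P b * ((M b * ρ b).trace).re} := by
  simp only [guessProbs, guessProb, Fintype.sum_bool, add_comm]

theorem guessProb_le_re_trace {P : X → ℝ} {ρ M : X → Matrix m m ℂ} {Q : Matrix m m ℂ}
    (hM : ∀ x, (M x).PosSemidef) (hM1 : ∑ x, M x = 1)
    (hQ : ∀ x, (Q - (P x : ℂ) • ρ x).PosSemidef) : guessProb P ρ M ≤ Q.trace.re :=
  calc guessProb P ρ M = ∑ x, (M x * ((P x : ℂ) • ρ x)).trace.re := by
        simp only [guessProb, re_trace_mul_ofReal_smul]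
    _ ≤ ∑ x, (M x * Q).trace.re := by
        refine sum_le_sum fun x _ => sub_nonneg.mp ?_
        rw [← Complex.sub_re, ← trace_sub, ← Matrix.mul_sub]
        exact (Complex.nonneg_iff.mp ((hM x).trace_mul_nonneg (hQ x))).1
    _ = Q.trace.re := by rw [← Complex.re_sum, ← trace_sum, ← sum_mul, hM1, Matrix.one_mul]

/-- A primal–dual certificate for the guessing problem: `M` is a measurement, `Q` is feasible for
the dual program (minimise `tr Q` subject to `Q ≥ P x • ρ x`), and the two objectives agree. -/
structure IsOptimalGuess (P : X → ℝ) (ρ M : X → Matrix m m ℂ) (Q : Matrix m m ℂ) : Prop where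
  posSemidef : ∀ x, (M x).PosSemidef
  sum_eq_one : ∑ x, M x = 1
  posSemidef_sub : ∀ x, (Q - (P x : ℂ) • ρ x).PosSemidef
  guessProb_eq : guessProb P ρ M = Q.trace.re

variable {P : X → ℝ} {ρ M : X → Matrix m m ℂ} {Q : Matrix m m ℂ}

theorem IsOptimalGuess.isGreatest (h : IsOptimalGuess P ρ M Q) :
    IsGreatest (guessProbs P ρ) Q.trace.re :=
  ⟨⟨M, h.posSemidef, h.sum_eq_one, h.guessProb_eq.symm⟩,
    fun _ ⟨_, hN, hN1, hp⟩ => hp ▸ guessProb_le_re_trace hN hN1 h.posSemidef_sub⟩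

theorem IsOptimalGuess.posSemidef_dual [Nonempty X] (h : IsOptimalGuess P ρ M Q)
    (hP : ∀ x, 0 ≤ P x) (hρ : ∀ x, (ρ x).PosSemidef) : Q.PosSemidef := by
  obtain ⟨x⟩ := ‹Nonempty X›
  simpa using (h.posSemidef_sub x).add ((hρ x).smul (Complex.zero_le_real.mpr (hP x)))

/-- Helstrom: `E` projects onto the nonnegative spectral subspace of `Δ = P₀ ρ₀ - P₁ ρ₁`, and the
dual point is `P₁ ρ₁ + E Δ = P₁ ρ₁ + Δ⁺`. -/
theorem exists_isOptimalGuess_bool (P : Bool → ℝ) {ρ : Bool → Matrix m m ℂ}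
    (hρ : ∀ b, (ρ b).IsHermitian) : ∃ M Q, IsOptimalGuess P ρ M Q := by
  set σ : Bool → Matrix m m ℂ := fun b => (P b : ℂ) • ρ b
  set Δ := σ false - σ true
  have hΔ : Δ.IsHermitian :=
    ((hρ false).smul (Complex.conj_ofReal _)).sub ((hρ true).smul (Complex.conj_ofReal _))
  have hcont (f : ℝ → ℝ) : ContinuousOn f (spectrum ℝ Δ) := Δ.finite_real_spectrum.continuousOn f
  have hcfc_nonneg {f : ℝ → ℝ} (hf : ∀ x, 0 ≤ f x) : (cfc f Δ).PosSemidef :=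
    (cfc_nonneg fun x _ => hf x).posSemidef
  set f : ℝ → ℝ := fun x => if 0 ≤ x then 1 else 0
  set E := cfc f Δ
  have hEΔ : E * Δ = cfc (fun x => f x * x) Δ := by
    rw [cfc_mul f (fun x => x) Δ (hcont _) (hcont _), cfc_id' ℝ Δ hΔ.isSelfAdjoint]
  refine ⟨fun b => cond b (1 - E) E, σ true + E * Δ, ⟨?_, ?_, ?_, ?_⟩⟩
  · have h1E : 1 - E = cfc (fun x => 1 - f x) Δ := by
      rw [cfc_sub (fun _ => 1) f Δ (hcont _) (hcont _), cfc_const_one ℝ Δ]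
    rintro (_ | _)
    · exact hcfc_nonneg fun x => by simp only [f]; split_ifs <;> norm_num
    · simpa only [cond_true, h1E] using
        hcfc_nonneg fun x => by simp only [f]; split_ifs <;> norm_num
  · rw [Fintype.sum_bool]
    exact sub_add_cancel 1 E
  · rintro (_ | _)
    · have hQ : σ true + E * Δ - σ false = cfc (fun x => f x * x - x) Δ := by
        rw [cfc_sub _ _ Δ (hcont _) (hcont _), ← hEΔ, cfc_id' ℝ Δ hΔ.isSelfAdjoint]
        simp only [Δ]
        abel
      show (σ true + E * Δ - σ false).PosSemidef
      rw [hQ]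
      exact hcfc_nonneg fun x => by simp only [f]; split_ifs <;> nlinarith
    · show (σ true + E * Δ - σ true).PosSemidef
      rw [add_sub_cancel_left, hEΔ]
      exact hcfc_nonneg fun x => by simp only [f]; split_ifs <;> nlinarith
  · simp only [guessProb, ← re_trace_mul_ofReal_smul, Fintype.sum_bool, cond_true, cond_false]
    rw [← Complex.add_re, ← trace_add]
    simp only [Δ, σ, Matrix.sub_mul, Matrix.mul_sub, Matrix.one_mul]
    congr 2
    abel

end Guessing

theorem IsOptimalGuess.piKron {ι : Type*} [Fintype ι] [DecidableEq ι] {X : ι → Type*}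
    [∀ i, Fintype (X i)] [∀ i, Nonempty (X i)] {m : ι → Type*} [∀ i, Fintype (m i)]
    [∀ i, DecidableEq (m i)] {P : (i : ι) → X i → ℝ} {ρ M : (i : ι) → X i → Matrix (m i) (m i) ℂ}
    {Q : (i : ι) → Matrix (m i) (m i) ℂ} (hP : ∀ i x, 0 ≤ P i x)
    (hρ : ∀ i x, (ρ i x).PosSemidef) (h : ∀ i, IsOptimalGuess (P i) (ρ i) (M i) (Q i)) :
    IsOptimalGuess (fun x : (i : ι) → X i => ∏ i, P i (x i)) (fun x => piKron fun i => ρ i (x i))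
      (fun x => piKron fun i => M i (x i)) (piKron Q) where
  posSemidef x := PosSemidef.piKron fun i => (h i).posSemidef (x i)
  sum_eq_one := by
    have hM i := (h i).sum_eq_one
    rw [← piKron_sum]
    simp only [hM, piKron_one]
  posSemidef_sub x := by
    rw [Complex.ofReal_prod, ← piKron_smul]
    exact posSemidef_piKron_sub_piKron
      (fun i => (hρ i (x i)).smul (Complex.zero_le_real.mpr (hP i (x i))))
      fun i => (h i).posSemidef_sub (x i)
  guessProb_eq := by
    have hMρ i b := ((h i).posSemidef b).trace_mul_nonneg (hρ i b)
    calc guessProb (fun x : (i : ι) → X i => ∏ i, P i (x i))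
          (fun x => Matrix.piKron fun i => ρ i (x i)) (fun x => Matrix.piKron fun i => M i (x i))
        = ∑ x : (i : ι) → X i, ∏ i, P i (x i) * ((M i (x i) * ρ i (x i)).trace).re := by
          simp only [guessProb, piKron_mul, trace_piKron,
            Complex.re_prod_of_nonneg _ fun i _ => hMρ i _, prod_mul_distrib]
      _ = ∏ i, ∑ b, P i b * ((M i b * ρ i b).trace).re := by rw [Fintype.prod_sum]
      _ = ∏ i, (Q i).trace.re := prod_congr rfl fun i _ => (h i).guessProb_eq
      _ = (Matrix.piKron Q).trace.re := (re_trace_piKron_of_posSemidef fun i =>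
          (h i).posSemidef_dual (hP i) (hρ i)).symm

/-- For a cq-state encoding each bit `x i` of a uniformly random string `x ∈ {0,1}^n`
independently into register `E_i` (state `ρ i (x i)`), the maximal probability of guessing
the full string by a measurement on `E = E_1 ⊗ ⋯ ⊗ E_n` equals the product of the
single-register guessing probabilities, and it is achieved by measuring each register
separately (i.e. by a product measurement). -/
theorem stmt_18 (n : ℕ) (D : Fin n → ℕ)
    (ρ : (i : Fin n) → Bool → Matrix (Fin (D i)) (Fin (D i)) ℂ)
    (hρ : ∀ i b, (ρ i b).PosSemidef ∧ (ρ i b).trace = 1) :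
    IsGreatest {p : ℝ |
        ∃ M : (Fin n → Bool) →
            Matrix ((i : Fin n) → Fin (D i)) ((i : Fin n) → Fin (D i)) ℂ,
          (∀ x, (M x).PosSemidef) ∧ (∑ x, M x = 1) ∧
          p = ∑ x, (1 / 2 ^ n) *
            ((M x *
              Matrix.of (fun (k l : (i : Fin n) → Fin (D i)) => ∏ i, ρ i (x i) (k i) (l i))).trace).re}
      (∏ i, sSup {p : ℝ | ∃ N : Bool → Matrix (Fin (D i)) (Fin (D i)) ℂ,
          (∀ b, (N b).PosSemidef) ∧ (N false + N true = 1) ∧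
          p = ∑ b, (1 / 2) * ((N b * ρ i b).trace).re}) ∧
    ∃ M : (i : Fin n) → Bool → Matrix (Fin (D i)) (Fin (D i)) ℂ,
      (∀ i b, (M i b).PosSemidef) ∧ (∀ i, M i false + M i true = 1) ∧
      (∑ x : Fin n → Bool, (1 / 2 ^ n) *
          ((Matrix.of (fun (k l : (i : Fin n) → Fin (D i)) => ∏ i, M i (x i) (k i) (l i)) *
            Matrix.of (fun (k l : (i : Fin n) → Fin (D i)) => ∏ i, ρ i (x i) (k i) (l i))).trace).re)
        = ∏ i, sSup {p : ℝ | ∃ N : Bool → Matrix (Fin (D i)) (Fin (D i)) ℂ,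
            (∀ b, (N b).PosSemidef) ∧ (N false + N true = 1) ∧
            p = ∑ b, (1 / 2) * ((N b * ρ i b).trace).re} := by
  choose M Q hopt using fun i =>
    exists_isOptimalGuess_bool (fun _ => 1 / 2) fun b => (hρ i b).1.isHermitian
  have hsup i : sSup (guessProbs (fun _ => 1 / 2) (ρ i)) = (Q i).trace.re :=
    (hopt i).isGreatest.csSup_eq
  simp only [guessProbs_bool] at hsup
  have hprior : ∏ _i : Fin n, (1 / 2 : ℝ) = 1 / 2 ^ n := by simp
  have hprod := IsOptimalGuess.piKron (fun _ _ => by norm_num) (fun i b => (hρ i b).1) hopt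
  simp only [hprior] at hprod
  have htr : (piKron Q).trace.re = ∏ i, (Q i).trace.re := re_trace_piKron_of_posSemidef fun i =>
    (hopt i).posSemidef_dual (fun _ => by norm_num) fun b => (hρ i b).1
  simp only [hsup, ← htr]
  refine ⟨hprod.isGreatest, M, fun i => (hopt i).posSemidef, fun i => ?_, hprod.guessProb_eq⟩
  rw [add_comm, ← Fintype.sum_bool]
  exact (hopt i).sum_eq_one
end
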